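/- arXiv:1907.11687 — 13 statements merged into one kernel-verified Lean document; each statement's English description precedes it below -/
import Mathlib

section
/- Let E be a real inner product space, τ ≥ 0, f : E → ℝ a τ-weakly convex function, μ > 0, and x ∈ E. If y ∈ E is a global minimizer of the function x' ↦ f(x') + (1/(2μ))‖x' − x‖², then the vector d := (1/μ)(x − y) is a τ-weak subgradient of f at y, i.e., f(w) ≥ f(y) + ⟨d, w − y⟩ − (τ/2)‖w − y‖² for all w ∈ E. -/
set_option maxHeartbeats 1000000


open scoped RealInnerProductSpace

/-- A proximal point update of a τ-weakly convex function is a τ-weak subgradient step. -/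
theorem proximal_update_is_subgradient_step
    {E : Type*} [NormedAddCommGroup E] [InnerProductSpace ℝ E]
    (τ : ℝ) (hτ : 0 ≤ τ) (f : E → ℝ)
    (hf : ConvexOn ℝ Set.univ (fun x => f x + τ / 2 * ‖x‖ ^ 2))
    (μ : ℝ) (hμ : 0 < μ) (x y : E)
    (hy : ∀ x' : E, f y + 1 / (2 * μ) * ‖y - x‖ ^ 2 ≤ f x' + 1 / (2 * μ) * ‖x' - x‖ ^ 2) :
    ∀ w : E, f w ≥ f y + ⟪(1 / μ) • (x - y), w - y⟫ - τ / 2 * ‖w - y‖ ^ 2 := by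
  intro w
  set c : ℝ := ‖w - y‖ ^ 2 with hc
  have hc0 : 0 ≤ c := by positivity
  have hinner : ⟪(1 / μ) • (x - y), w - y⟫ = (1 / μ) * ⟪x - y, w - y⟫ := by
    rw [real_inner_smul_left]
  have key : ∀ t : ℝ, 0 < t → t ≤ 1 →
      f y + ⟪(1 / μ) • (x - y), w - y⟫ - τ / 2 * c + t * (τ / 2 - 1 / (2 * μ)) * c ≤ f w := by
    intro t ht0 ht1
    set a : E := y + t • (w - y) with ha
    -- convexity inequality
    have hconv := hf.2 (Set.mem_univ y) (Set.mem_univ w) (by linarith : (0:ℝ) ≤ 1 - t)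
      (le_of_lt ht0) (by ring : (1 - t) + t = 1)
    have haeq : (1 - t) • y + t • w = a := by
      rw [ha]; module
    rw [haeq] at hconv
    simp only [smul_eq_mul] at hconv
    -- minimality
    have hmin := hy a
    -- norm expansions
    have e1 : ‖a‖ ^ 2 = ‖y‖ ^ 2 + 2 * t * ⟪y, w - y⟫ + t ^ 2 * c := by
      rw [ha, norm_add_sq_real, real_inner_smul_right, norm_smul]
      simp [abs_of_pos ht0, hc]
      ring
    have e2 : ‖w‖ ^ 2 = ‖y‖ ^ 2 + 2 * ⟪y, w - y⟫ + c := by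
      have : w = y + (w - y) := by abel
      rw [this, norm_add_sq_real]
      simp [hc]
    have e3 : ‖a - x‖ ^ 2 = ‖y - x‖ ^ 2 + 2 * t * ⟪y - x, w - y⟫ + t ^ 2 * c := by
      have : a - x = (y - x) + t • (w - y) := by rw [ha]; abel
      rw [this, norm_add_sq_real, real_inner_smul_right, norm_smul]
      simp [abs_of_pos ht0, hc]
      ring
    have e4 : ⟪x - y, w - y⟫ = - ⟪y - x, w - y⟫ := by
      rw [show x - y = -(y - x) by abel, inner_neg_left]
    rw [hinner, e4]
    rw [e1, e2] at hconv
    rw [e3] at hmin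
    have hμ' : 0 < 1 / (2 * μ) := by positivity
    -- combine: from hmin, 0 ≤ f a - f y + 1/(2μ)(2t⟪y-x,w-y⟫ + t²c)
    -- from hconv, f a ≤ (1-t) f y + t f w + τ/2 (t(1-t)c - ... ) after simplification
    have h1 : 0 ≤ f a - f y + 1 / (2 * μ) * (2 * t * ⟪y - x, w - y⟫ + t ^ 2 * c) := by
      nlinarith [hmin]
    have h2 : f a ≤ (1 - t) * f y + t * f w + τ / 2 * (t * (1 - t) * c) := by
      nlinarith [hconv]
    have hstep : 0 ≤ t * (f w - f y) + τ / 2 * (t * (1 - t) * c)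
        + 1 / (2 * μ) * (2 * t * ⟪y - x, w - y⟫ + t ^ 2 * c) := by
      nlinarith
    -- divide by t
    have hμeq : (1:ℝ) / μ = 2 * (1 / (2 * μ)) := by field_simp
    set u : ℝ := 1 / (2 * μ) with hu
    have hfinal : 0 ≤ (f w - f y) + τ / 2 * ((1 - t) * c)
        + u * (2 * ⟪y - x, w - y⟫ + t * c) := by
      have heq : t * ((f w - f y) + τ / 2 * ((1 - t) * c)
          + u * (2 * ⟪y - x, w - y⟫ + t * c))
          = t * (f w - f y) + τ / 2 * (t * (1 - t) * c)
          + u * (2 * t * ⟪y - x, w - y⟫ + t ^ 2 * c) := by ring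
      have h3 : 0 ≤ t * ((f w - f y) + τ / 2 * ((1 - t) * c)
          + u * (2 * ⟪y - x, w - y⟫ + t * c)) := by rw [heq]; exact hstep
      exact nonneg_of_mul_nonneg_right h3 ht0
    rw [hμeq]
    ring_nf at hfinal ⊢
    linarith [hfinal]
  -- take limit t → 0⁺ via ε argument
  rw [ge_iff_le]
  refine le_of_forall_pos_le_add ?_
  intro ε hε
  set K : ℝ := (τ / 2 - 1 / (2 * μ)) * c with hK
  rcases le_or_gt 0 K with hK0 | hK0
  · have h := key 1 one_pos le_rfl
    have e : (1:ℝ) * (τ / 2 - 1 / (2 * μ)) * c = K := by rw [hK]; ring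
    rw [e] at h
    linarith
  · set t : ℝ := min 1 (ε / (-K)) with ht
    have htpos : 0 < t := lt_min one_pos (div_pos hε (by linarith))
    have ht1 : t ≤ 1 := min_le_left _ _
    have h := key t htpos ht1
    have e : t * (τ / 2 - 1 / (2 * μ)) * c = t * K := by rw [hK]; ring
    rw [e] at h
    have htK : -ε ≤ t * K := by
      have h2 : t ≤ ε / (-K) := min_le_right _ _
      have h3 : t * (-K) ≤ ε := by
        rw [← le_div_iff₀ (by linarith)]; exact h2
      linarith [h3]
    linarith
end

section
/- Let E be a real inner product space, τ ≥ 0, L ≥ 0, μ > 0, and f : E → ℝ. Let x, z ∈ E and let g ∈ E satisfy ‖g‖ ≤ L and f(w) ≥ f(x) + ⟨g, w − x⟩ − (τ/2)‖w − x‖² for all w ∈ E. Set x' = x − μ·g. Then ‖x' − z‖² ≤ (1 + τμ)‖x − z‖² − 2μ(f(x) − f(z)) + μ²L². -/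
open scoped RealInnerProductSpace

/-- One-step distance estimate for a weak-subgradient step (eq. (4.3)). -/
theorem subgradient_step_distance_estimate
    {E : Type*} [NormedAddCommGroup E] [InnerProductSpace ℝ E]
    (τ L μ : ℝ) (hτ : 0 ≤ τ) (hL : 0 ≤ L) (hμ : 0 < μ)
    (f : E → ℝ) (x z g : E) (hg : ‖g‖ ≤ L)
    (hsub : ∀ w : E, f w ≥ f x + ⟪g, w - x⟫ - τ / 2 * ‖w - x‖ ^ 2)
    (x' : E) (hx' : x' = x - μ • g) :
    ‖x' - z‖ ^ 2 ≤ (1 + τ * μ) * ‖x - z‖ ^ 2 - 2 * μ * (f x - f z) + μ ^ 2 * L ^ 2 := by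
  have hz := hsub z
  have hexp : ‖x' - z‖ ^ 2
      = ‖x - z‖ ^ 2 - 2 * μ * ⟪g, x - z⟫ + μ ^ 2 * ‖g‖ ^ 2 := by
    have : x' - z = (x - z) - μ • g := by rw [hx']; abel
    rw [this]
    rw [norm_sub_sq_real, inner_smul_right, norm_smul, real_inner_comm]
    simp [mul_pow, abs_of_pos hμ]
    ring
  have hinner : -⟪g, x - z⟫ ≤ f z - f x + τ / 2 * ‖x - z‖ ^ 2 := by
    have h1 : ⟪g, z - x⟫ = -⟪g, x - z⟫ := by
      rw [← inner_neg_right]; congr 1; abel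
    have h2 : ‖z - x‖ = ‖x - z‖ := norm_sub_rev _ _
    rw [h1, h2] at hz
    linarith
  have hgL : ‖g‖ ^ 2 ≤ L ^ 2 := by
    exact pow_le_pow_left₀ (norm_nonneg g) hg 2
  calc ‖x' - z‖ ^ 2 = ‖x - z‖ ^ 2 + 2 * μ * (-⟪g, x - z⟫) + μ ^ 2 * ‖g‖ ^ 2 := by
        rw [hexp]; ring
    _ ≤ ‖x - z‖ ^ 2 + 2 * μ * (f z - f x + τ / 2 * ‖x - z‖ ^ 2) + μ ^ 2 * L ^ 2 := by
        have := mul_le_mul_of_nonneg_left hinner (by linarith : (0:ℝ) ≤ 2 * μ)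
        have := mul_le_mul_of_nonneg_left hgL (by positivity : (0:ℝ) ≤ μ ^ 2)
        nlinarith
    _ = (1 + τ * μ) * ‖x - z‖ ^ 2 - 2 * μ * (f x - f z) + μ ^ 2 * L ^ 2 := by ring
end

section
/- Let E be a real inner product space, τ ≥ 0, L ≥ 0, and f : E → ℝ a τ-weakly convex function that is Lipschitz with constant L. Let μ > 0, x ∈ E, and let y ∈ E be a global minimizer of x' ↦ f(x') + (1/(2μ))‖x' − x‖². Then for every z ∈ E, ‖y − z‖² ≤ ‖x − z‖² − 2μ(f(y) − f(z)) + τμ‖y − z‖² + μ²L². -/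
/-!
A `τ`-weakly convex function is `(-τ)`-strongly convex (`StrongConvexOn` allows negative moduli).
Comparing the prox objective at its minimizer `y` with its value at `y + t • (z - y)` and letting
`t → 0⁺` gives the weak-subgradient inequality
`f z ≥ f y + ⟪(x - y) / μ, z - y⟫ - τ / 2 * ‖z - y‖ ^ 2`; expanding
`‖x - z‖ ^ 2 = ‖(x - y) - (z - y)‖ ^ 2` turns it into the distance estimate.
-/

open Filter Set Topology
open scoped InnerProductSpace

theorem le_of_forall_mem_Ioc_le_add_mul {a b c : ℝ} (h : ∀ t ∈ Ioc (0 : ℝ) 1, a ≤ b + t * c) :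
    a ≤ b := by
  have hlim : Tendsto (fun t : ℝ => b + t * c) (𝓝[>] 0) (𝓝 b) := by
    have hcont : Continuous fun t : ℝ => b + t * c := by fun_prop
    simpa using (hcont.tendsto 0).mono_left nhdsWithin_le_nhds
  refine ge_of_tendsto hlim ?_
  filter_upwards [Ioc_mem_nhdsGT one_pos] with t ht using h t ht

section InnerProductSpace

variable {E : Type*} [NormedAddCommGroup E] [InnerProductSpace ℝ E]

theorem strongConvexOn_neg_iff {s : Set E} {τ : ℝ} {f : E → ℝ} :
    StrongConvexOn s (-τ) f ↔ ConvexOn ℝ s fun x => f x + τ / 2 * ‖x‖ ^ 2 := by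
  simp only [strongConvexOn_iff_convex, neg_div, neg_mul, sub_neg_eq_add]

theorem StrongConvexOn.subgradient_inequality_of_isMinOn {s : Set E} {m c : ℝ} {f : E → ℝ}
    (hf : StrongConvexOn s m f) {x y z : E} (hys : y ∈ s) (hzs : z ∈ s)
    (hy : IsMinOn (fun x' => f x' + c * ‖x' - x‖ ^ 2) s y) :
    f y + 2 * c * ⟪x - y, z - y⟫_ℝ + m / 2 * ‖z - y‖ ^ 2 ≤ f z := by
  refine le_of_forall_mem_Ioc_le_add_mul (c := (c + m / 2) * ‖z - y‖ ^ 2) fun t ⟨ht0, ht1⟩ => ?_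
  have hconv := hf.2 hys hzs (sub_nonneg.2 ht1) ht0.le (sub_add_cancel 1 t)
  set w := (1 - t) • y + t • z
  have hmin : f y + c * ‖y - x‖ ^ 2 ≤ f w + c * ‖w - x‖ ^ 2 :=
    isMinOn_iff.1 hy w <| hf.1 hys hzs (sub_nonneg.2 ht1) ht0.le (sub_add_cancel 1 t)
  have hdist :
      ‖w - x‖ ^ 2 = ‖y - x‖ ^ 2 - 2 * t * ⟪x - y, z - y⟫_ℝ + t ^ 2 * ‖z - y‖ ^ 2 := by
    rw [show w - x = (y - x) + t • (z - y) by module, norm_add_sq_real, real_inner_smul_right,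
      norm_smul, Real.norm_eq_abs, mul_pow, sq_abs, ← neg_sub x y, inner_neg_left]
    ring
  rw [smul_eq_mul, smul_eq_mul, norm_sub_rev y z] at hconv
  rw [hdist] at hmin
  refine le_of_mul_le_mul_left ?_ ht0
  linear_combination hmin + hconv

end InnerProductSpace

theorem proximal_point_step_distance_estimate_general
    {E : Type*} [NormedAddCommGroup E] [InnerProductSpace ℝ E]
    (τ L : ℝ) (f : E → ℝ)
    (hwc : ConvexOn ℝ Set.univ (fun x => f x + τ / 2 * ‖x‖ ^ 2))
    (μ : ℝ) (hμ : 0 < μ) (x y : E)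
    (hy : ∀ x' : E, f y + 1 / (2 * μ) * ‖y - x‖ ^ 2 ≤ f x' + 1 / (2 * μ) * ‖x' - x‖ ^ 2) :
    ∀ z : E, ‖y - z‖ ^ 2 ≤ ‖x - z‖ ^ 2 - 2 * μ * (f y - f z)
      + τ * μ * ‖y - z‖ ^ 2 + μ ^ 2 * L ^ 2 := by
  intro z
  have hsub := (strongConvexOn_neg_iff.2 hwc).subgradient_inequality_of_isMinOn
    (mem_univ y) (mem_univ z) (isMinOn_univ_iff.2 hy)
  have hexpand : ‖x - z‖ ^ 2 = ‖x - y‖ ^ 2 - 2 * ⟪x - y, z - y⟫_ℝ + ‖z - y‖ ^ 2 := by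
    rw [← norm_sub_sq_real, sub_sub_sub_cancel_right]
  have hscaled : 2 * ⟪x - y, z - y⟫_ℝ ≤ 2 * μ * (f z - f y) + τ * μ * ‖z - y‖ ^ 2 := by
    have := mul_le_mul_of_nonneg_left hsub (by positivity : 0 ≤ 2 * μ)
    field_simp at this
    linarith
  rw [norm_sub_rev y z]
  linarith [sq_nonneg ‖x - y‖, (by positivity : 0 ≤ μ ^ 2 * L ^ 2)]

/-- One-step distance estimate for the incremental proximal point update (eq. (4.8)). -/
theorem proximal_point_step_distance_estimate
    {E : Type*} [NormedAddCommGroup E] [InnerProductSpace ℝ E]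
    (τ L : ℝ) (hτ : 0 ≤ τ) (hL : 0 ≤ L) (f : E → ℝ)
    (hwc : ConvexOn ℝ Set.univ (fun x => f x + τ / 2 * ‖x‖ ^ 2))
    (hlip : ∀ x y : E, |f x - f y| ≤ L * ‖x - y‖)
    (μ : ℝ) (hμ : 0 < μ) (x y : E)
    (hy : ∀ x' : E, f y + 1 / (2 * μ) * ‖y - x‖ ^ 2 ≤ f x' + 1 / (2 * μ) * ‖x' - x‖ ^ 2) :
    ∀ z : E, ‖y - z‖ ^ 2 ≤ ‖x - z‖ ^ 2 - 2 * μ * (f y - f z)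
      + τ * μ * ‖y - z‖ ^ 2 + μ ^ 2 * L ^ 2 :=
  proximal_point_step_distance_estimate_general τ L f hwc μ hμ x y hy
end

section
/- Let E be a real inner product space, τ ≥ 0, L ≥ 0, μ > 0, x₀ ∈ E, and f, F : E → ℝ such that F is convex and Lipschitz with constant L, F(x₀) = f(x₀), and F(w) ≤ f(w) + (τ/2)‖w − x₀‖² for all w ∈ E. If x₁ is a global minimizer of x ↦ F(x) + (1/(2μ))‖x − x₀‖², then for every z ∈ E, ‖x₁ − z‖² ≤ ‖x₀ − z‖² − 2μ(f(x₀) − f(z)) + τμ‖x₀ − z‖² + 2μL‖x₁ − x₀‖ + μ²L². -/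
/-!
The proximal objective `F + ‖· - x₀‖² / (2μ)` is `1/μ`-strongly convex, so it grows quadratically
away from its minimizer `x₁`; this is the three-point inequality
`2μ (F x₁ - F z) ≤ ‖z - x₀‖² - ‖x₁ - x₀‖² - ‖z - x₁‖²`. Bounding `F x₁` from below by Lipschitz
continuity at `x₀`, and `F z` from above by the quadratic approximation bound, gives the estimate.
-/

open Set Filter Topology

lemma le_of_forall_le_add_mul {a b K : ℝ} (h : ∀ t ∈ Ioo (0 : ℝ) 1, a ≤ b + t * K) : a ≤ b := by
  have hlim : Tendsto (fun t : ℝ ↦ b + t * K) (𝓝[>] 0) (𝓝 b) :=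
    tendsto_nhdsWithin_of_tendsto_nhds <|
      (by fun_prop : Continuous fun t : ℝ ↦ b + t * K).tendsto' 0 b (by simp)
  exact ge_of_tendsto hlim (eventually_of_mem (Ioo_mem_nhdsGT one_pos) h)

section InnerProductSpace

variable {E : Type*} [NormedAddCommGroup E] [InnerProductSpace ℝ E]

lemma norm_smul_add_smul_sq_of_add_eq_one (x y : E) {a b : ℝ} (hab : a + b = 1) :
    ‖a • x + b • y‖ ^ 2 = a * ‖x‖ ^ 2 + b * ‖y‖ ^ 2 - a * b * ‖x - y‖ ^ 2 := by
  rw [norm_add_sq_real, norm_sub_sq_real, norm_smul, norm_smul, real_inner_smul_left,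
    real_inner_smul_right, mul_pow, mul_pow, Real.norm_eq_abs, Real.norm_eq_abs, sq_abs, sq_abs]
  obtain rfl := eq_sub_of_add_eq hab
  ring

lemma strongConvexOn_mul_norm_sub_sq (c : ℝ) (x₀ : E) :
    StrongConvexOn univ (2 * c) fun x ↦ c * ‖x - x₀‖ ^ 2 := by
  refine ⟨convex_univ, fun x _ y _ a b _ _ hab ↦ le_of_eq ?_⟩
  obtain rfl : b = 1 - a := by linarith
  have hshift : a • x + (1 - a) • y - x₀ = a • (x - x₀) + (1 - a) • (y - x₀) := by module
  simp only [smul_eq_mul]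
  rw [hshift, norm_smul_add_smul_sq_of_add_eq_one _ _ (add_sub_cancel a 1),
    sub_sub_sub_cancel_right]
  ring

lemma ConvexOn.add_strongConvexOn {s : Set E} {m : ℝ} {f g : E → ℝ} (hf : ConvexOn ℝ s f)
    (hg : StrongConvexOn s m g) : StrongConvexOn s m (f + g) := by
  have h := hf.uniformConvexOn_zero.add hg
  rwa [zero_add] at h

lemma StrongConvexOn.add_mul_norm_sub_sq_le_of_isMinOn {s : Set E} {m : ℝ} {g : E → ℝ} {x : E}
    (hg : StrongConvexOn s m g) (hx : x ∈ s) (hmin : IsMinOn g s x) {y : E} (hy : y ∈ s) :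
    g x + m / 2 * ‖y - x‖ ^ 2 ≤ g y := by
  suffices ∀ t ∈ Ioo (0 : ℝ) 1, g x + m / 2 * ‖y - x‖ ^ 2 ≤ g y + t * (m / 2 * ‖y - x‖ ^ 2) from
    le_of_forall_le_add_mul this
  intro t ⟨ht0, ht1⟩
  have hseg := hg.2 hx hy (sub_nonneg.2 ht1.le) ht0.le (sub_add_cancel 1 t)
  have hle : g x ≤ g ((1 - t) • x + t • y) :=
    hmin (hg.1 hx hy (sub_nonneg.2 ht1.le) ht0.le (sub_add_cancel 1 t))
  rw [smul_eq_mul, smul_eq_mul, norm_sub_rev] at hseg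
  have hscaled : t * (g x + m / 2 * ‖y - x‖ ^ 2) ≤ t * (g y + t * (m / 2 * ‖y - x‖ ^ 2)) := by
    linarith
  exact le_of_mul_le_mul_left hscaled ht0

lemma ConvexOn.prox_three_point {F : E → ℝ} (hF : ConvexOn ℝ univ F) {c : ℝ} {x₀ x₁ : E}
    (hmin : ∀ x, F x₁ + c * ‖x₁ - x₀‖ ^ 2 ≤ F x + c * ‖x - x₀‖ ^ 2) (z : E) :
    F x₁ + c * ‖x₁ - x₀‖ ^ 2 + c * ‖z - x₁‖ ^ 2 ≤ F z + c * ‖z - x₀‖ ^ 2 := by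
  have hobj := hF.add_strongConvexOn (strongConvexOn_mul_norm_sub_sq c x₀)
  have h := hobj.add_mul_norm_sub_sq_le_of_isMinOn (mem_univ x₁) (isMinOn_univ_iff.2 hmin)
    (mem_univ z)
  rwa [mul_div_cancel_left₀ c two_ne_zero] at h

end InnerProductSpace

theorem prox_linear_step_distance_estimate_general
    {E : Type*} [NormedAddCommGroup E] [InnerProductSpace ℝ E]
    (τ L : ℝ)
    (μ : ℝ) (hμ : 0 < μ) (x₀ : E) (f F : E → ℝ)
    (hFc : ConvexOn ℝ Set.univ F)
    (hFl : ∀ x y : E, |F x - F y| ≤ L * ‖x - y‖)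
    (hF0 : F x₀ = f x₀)
    (hFapprox : ∀ w : E, F w ≤ f w + τ / 2 * ‖w - x₀‖ ^ 2)
    (x₁ : E)
    (hx₁ : ∀ x : E, F x₁ + 1 / (2 * μ) * ‖x₁ - x₀‖ ^ 2 ≤ F x + 1 / (2 * μ) * ‖x - x₀‖ ^ 2) :
    ∀ z : E, ‖x₁ - z‖ ^ 2 ≤ ‖x₀ - z‖ ^ 2 - 2 * μ * (f x₀ - f z) + τ * μ * ‖x₀ - z‖ ^ 2
      + 2 * μ * L * ‖x₁ - x₀‖ + μ ^ 2 * L ^ 2 := by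
  intro z
  have hdist : ‖x₁ - z‖ ^ 2 + ‖x₁ - x₀‖ ^ 2 ≤ ‖x₀ - z‖ ^ 2 + 2 * μ * (F z - F x₁) := by
    have h := mul_le_mul_of_nonneg_left (hFc.prox_three_point hx₁ z) (by positivity : 0 ≤ 2 * μ)
    rw [norm_sub_rev z x₁, norm_sub_rev z x₀] at h
    field_simp at h
    linarith
  have hlip : f x₀ - F x₁ ≤ L * ‖x₁ - x₀‖ := by
    rw [← hF0, norm_sub_rev]
    exact (le_abs_self _).trans (hFl x₀ x₁)
  have happrox : F z - f z ≤ τ / 2 * ‖x₀ - z‖ ^ 2 := by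
    rw [norm_sub_rev]
    linarith [hFapprox z]
  linarith [mul_le_mul_of_nonneg_left hlip (by positivity : 0 ≤ 2 * μ),
    mul_le_mul_of_nonneg_left happrox (by positivity : 0 ≤ 2 * μ), sq_nonneg ‖x₁ - x₀‖,
    sq_nonneg (μ * L)]

/-- One-step distance estimate for the incremental prox-linear update (eq. (4.11)). -/
theorem prox_linear_step_distance_estimate
    {E : Type*} [NormedAddCommGroup E] [InnerProductSpace ℝ E]
    (τ L : ℝ) (hτ : 0 ≤ τ) (hL : 0 ≤ L)
    (μ : ℝ) (hμ : 0 < μ) (x₀ : E) (f F : E → ℝ)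
    (hFc : ConvexOn ℝ Set.univ F)
    (hFl : ∀ x y : E, |F x - F y| ≤ L * ‖x - y‖)
    (hF0 : F x₀ = f x₀)
    (hFapprox : ∀ w : E, F w ≤ f w + τ / 2 * ‖w - x₀‖ ^ 2)
    (x₁ : E)
    (hx₁ : ∀ x : E, F x₁ + 1 / (2 * μ) * ‖x₁ - x₀‖ ^ 2 ≤ F x + 1 / (2 * μ) * ‖x - x₀‖ ^ 2) :
    ∀ z : E, ‖x₁ - z‖ ^ 2 ≤ ‖x₀ - z‖ ^ 2 - 2 * μ * (f x₀ - f z) + τ * μ * ‖x₀ - z‖ ^ 2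
      + 2 * μ * L * ‖x₁ - x₀‖ + μ ^ 2 * L ^ 2 :=
  prox_linear_step_distance_estimate_general τ L μ hμ x₀ f F hFc hFl hF0 hFapprox x₁ hx₁
end

section
/- Let E be a finite-dimensional real inner product space, m ≥ 1 a natural number, τ ≥ 0, L > 0, α > 0, and f₁, …, f_m : E → ℝ functions each Lipschitz with constant L. Let f = (1/m)∑ᵢ fᵢ, let 𝒳 ⊆ E be nonempty and closed, and let f⋆ ∈ ℝ be such that f(x⋆) = f⋆ for all x⋆ ∈ 𝒳 and f(x) − f⋆ ≥ α·dist(x, 𝒳) for all x ∈ E. Let μ > 0 and let x₀, x₁, …, x_m ∈ E satisfy xᵢ = xᵢ₋₁ − μ·gᵢ for i = 1, …, m, where each gᵢ ∈ E satisfies ‖gᵢ‖ ≤ L and fᵢ(w) ≥ fᵢ(xᵢ₋₁) + ⟨gᵢ, w − xᵢ₋₁⟩ − (τ/2)‖w − xᵢ₋₁‖² for all w ∈ E. Then dist(x_m, 𝒳)² ≤ (1 + 2mτμ)·dist(x₀, 𝒳)² − 2mαμ·dist(x₀, 𝒳) + m²μ²L² + τm³μ³L². -/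
open scoped RealInnerProductSpace

private lemma sum_id_real (m : ℕ) :
    ∑ i ∈ Finset.range m, (i : ℝ) = m * (m - 1) / 2 := by
  induction m with
  | zero => simp
  | succ n ih => rw [Finset.sum_range_succ, ih]; push_cast; ring

private lemma sum_sq_real (m : ℕ) :
    ∑ i ∈ Finset.range m, (i : ℝ) ^ 2 = m * (m - 1) * (2 * m - 1) / 6 := by
  induction m with
  | zero => simp
  | succ n ih => rw [Finset.sum_range_succ, ih]; push_cast; ring

set_option maxHeartbeats 1000000 in
/-- Key per-cycle recursion (eq. (4.7)) for incremental (sub)-gradient descent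
under sharpness. -/
theorem incremental_subgradient_cycle_recursion
    {E : Type*} [NormedAddCommGroup E] [InnerProductSpace ℝ E] [FiniteDimensional ℝ E]
    (m : ℕ) (hm : 1 ≤ m) (τ L α : ℝ) (hτ : 0 ≤ τ) (hL : 0 < L) (hα : 0 < α)
    (f : ℕ → E → ℝ)
    (hlip : ∀ i < m, ∀ x y : E, |f i x - f i y| ≤ L * ‖x - y‖)
    (𝒳 : Set E) (hne : 𝒳.Nonempty) (hcl : IsClosed 𝒳) (fstar : ℝ)
    (hval : ∀ xs ∈ 𝒳, (1 / (m : ℝ)) * ∑ i ∈ Finset.range m, f i xs = fstar)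
    (hsharp : ∀ x : E,
      (1 / (m : ℝ)) * ∑ i ∈ Finset.range m, f i x - fstar ≥ α * Metric.infDist x 𝒳)
    (μ : ℝ) (hμ : 0 < μ) (x g : ℕ → E)
    (hupd : ∀ i < m, x (i + 1) = x i - μ • g i)
    (hg : ∀ i < m, ‖g i‖ ≤ L)
    (hsub : ∀ i < m, ∀ w : E,
      f i w ≥ f i (x i) + ⟪g i, w - x i⟫ - τ / 2 * ‖w - x i‖ ^ 2) :
    Metric.infDist (x m) 𝒳 ^ 2 ≤
      (1 + 2 * m * τ * μ) * Metric.infDist (x 0) 𝒳 ^ 2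
        - 2 * m * α * μ * Metric.infDist (x 0) 𝒳
        + m ^ 2 * μ ^ 2 * L ^ 2 + τ * m ^ 3 * μ ^ 3 * L ^ 2 := by
  obtain ⟨xs, hxs, hDdist⟩ := hcl.exists_infDist_eq_dist hne (x 0)
  set D := Metric.infDist (x 0) 𝒳 with hDdef
  have hD0 : 0 ≤ D := Metric.infDist_nonneg
  have hm1 : (1 : ℝ) ≤ (m : ℝ) := by exact_mod_cast hm
  have hmpos : (0 : ℝ) < (m : ℝ) := by linarith
  have hDnorm : ‖x 0 - xs‖ = D := by rw [hDdist, dist_eq_norm]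
  -- drift bound
  have hiter : ∀ i ≤ m, ‖x i - x 0‖ ≤ (i : ℝ) * μ * L := by
    intro i hi
    induction i with
    | zero => simp
    | succ n ih =>
      have hn : n < m := hi
      have h1 : x (n + 1) - x 0 = (x n - x 0) - μ • g n := by
        rw [hupd n hn]; abel
      have h2 : ‖x (n + 1) - x 0‖ ≤ ‖x n - x 0‖ + μ * ‖g n‖ := by
        rw [h1]
        calc ‖(x n - x 0) - μ • g n‖ ≤ ‖x n - x 0‖ + ‖μ • g n‖ := norm_sub_le _ _
          _ = ‖x n - x 0‖ + μ * ‖g n‖ := by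
              rw [norm_smul, Real.norm_eq_abs, abs_of_pos hμ]
      have h3 : ‖g n‖ ≤ L := hg n hn
      have h4 := ih (Nat.le_of_succ_le hi)
      push_cast
      nlinarith
  have hdist : ∀ i ≤ m, ‖x i - xs‖ ≤ D + (i : ℝ) * μ * L := by
    intro i hi
    calc ‖x i - xs‖ = ‖(x i - x 0) + (x 0 - xs)‖ := by abel_nf
      _ ≤ ‖x i - x 0‖ + ‖x 0 - xs‖ := norm_add_le _ _
      _ ≤ (i : ℝ) * μ * L + D := by
          have := hiter i hi; rw [hDnorm]; linarith
      _ = D + (i : ℝ) * μ * L := by ring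
  -- per-step inequality
  have key : ∀ i < m, ‖x (i + 1) - xs‖ ^ 2 ≤
      ‖x i - xs‖ ^ 2 + 2 * μ * (f i xs - f i (x i)) + τ * μ * ‖x i - xs‖ ^ 2
        + μ ^ 2 * L ^ 2 := by
    intro i hi
    have h1 : x (i + 1) - xs = (x i - xs) - μ • g i := by rw [hupd i hi]; abel
    have h2 : ‖x (i + 1) - xs‖ ^ 2 =
        ‖x i - xs‖ ^ 2 - 2 * (μ * ⟪g i, x i - xs⟫) + μ ^ 2 * ‖g i‖ ^ 2 := by
      rw [h1, norm_sub_sq_real, real_inner_smul_right, norm_smul,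
        Real.norm_eq_abs, abs_of_pos hμ, real_inner_comm]
      ring
    have h3 := hsub i hi xs
    have h4 : ⟪g i, xs - x i⟫ = -⟪g i, x i - xs⟫ := by
      rw [← inner_neg_right]; congr 1; abel
    have h5 : ‖xs - x i‖ = ‖x i - xs‖ := norm_sub_rev _ _
    rw [h4, h5] at h3
    have h6 : f i (x i) - f i xs - τ / 2 * ‖x i - xs‖ ^ 2 ≤ ⟪g i, x i - xs⟫ := by
      linarith
    have h7 : ‖g i‖ ^ 2 ≤ L ^ 2 := by
      have := hg i hi; nlinarith [norm_nonneg (g i)]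
    nlinarith [mul_le_mul_of_nonneg_left h6 hμ.le, sq_nonneg μ]
  -- summed inequality
  have hsum : ∀ k, k ≤ m → ‖x k - xs‖ ^ 2 ≤ ‖x 0 - xs‖ ^ 2 +
      ∑ i ∈ Finset.range k, (2 * μ * (f i xs - f i (x i))
        + τ * μ * ‖x i - xs‖ ^ 2 + μ ^ 2 * L ^ 2) := by
    intro k
    induction k with
    | zero => simp
    | succ n ih =>
      intro hn
      have hn' : n < m := hn
      have h1 := key n hn'
      have h2 := ih (Nat.le_of_succ_le hn)
      rw [Finset.sum_range_succ]
      linarith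
  -- termwise bound
  have hterm : ∀ i ∈ Finset.range m,
      2 * μ * (f i xs - f i (x i)) + τ * μ * ‖x i - xs‖ ^ 2 + μ ^ 2 * L ^ 2 ≤
      2 * μ * (f i xs - f i (x 0)) + (2 * μ ^ 2 * L ^ 2) * (i : ℝ)
        + (τ * μ * (2 * D * μ * L)) * (i : ℝ)
        + (τ * μ * (μ ^ 2 * L ^ 2)) * (i : ℝ) ^ 2
        + (τ * μ * D ^ 2 + μ ^ 2 * L ^ 2) := by
    intro i hi
    rw [Finset.mem_range] at hi
    have hfi : f i (x 0) - f i (x i) ≤ L * ((i : ℝ) * μ * L) := by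
      have h1 := hlip i hi (x 0) (x i)
      have h2 : ‖x 0 - x i‖ = ‖x i - x 0‖ := norm_sub_rev _ _
      have h3 := hiter i hi.le
      have h4 : f i (x 0) - f i (x i) ≤ L * ‖x i - x 0‖ := by
        rw [← h2]
        calc f i (x 0) - f i (x i) ≤ |f i (x 0) - f i (x i)| := le_abs_self _
          _ ≤ L * ‖x 0 - x i‖ := h1
      nlinarith
    have hdi : ‖x i - xs‖ ≤ D + (i : ℝ) * μ * L := hdist i hi.le
    have hsq : ‖x i - xs‖ ^ 2 ≤ (D + (i : ℝ) * μ * L) ^ 2 := by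
      nlinarith [norm_nonneg (x i - xs)]
    have hτμ : 0 ≤ τ * μ := mul_nonneg hτ hμ.le
    nlinarith [mul_le_mul_of_nonneg_left hsq hτμ, mul_le_mul_of_nonneg_left hfi hμ.le]
  have hsum_le := Finset.sum_le_sum hterm
  -- closed form of the bounding sum
  have hclose : ∑ i ∈ Finset.range m, (2 * μ * (f i xs - f i (x 0))
        + (2 * μ ^ 2 * L ^ 2) * (i : ℝ)
        + (τ * μ * (2 * D * μ * L)) * (i : ℝ)
        + (τ * μ * (μ ^ 2 * L ^ 2)) * (i : ℝ) ^ 2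
        + (τ * μ * D ^ 2 + μ ^ 2 * L ^ 2))
      = 2 * μ * ((∑ i ∈ Finset.range m, f i xs) - ∑ i ∈ Finset.range m, f i (x 0))
        + (2 * μ ^ 2 * L ^ 2) * ((m : ℝ) * (m - 1) / 2)
        + (τ * μ * (2 * D * μ * L)) * ((m : ℝ) * (m - 1) / 2)
        + (τ * μ * (μ ^ 2 * L ^ 2)) * ((m : ℝ) * (m - 1) * (2 * m - 1) / 6)
        + (m : ℝ) * (τ * μ * D ^ 2 + μ ^ 2 * L ^ 2) := by
    rw [Finset.sum_add_distrib, Finset.sum_add_distrib, Finset.sum_add_distrib,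
      Finset.sum_add_distrib, ← Finset.mul_sum, ← Finset.mul_sum, ← Finset.mul_sum,
      ← Finset.mul_sum, Finset.sum_const, Finset.card_range, nsmul_eq_mul,
      sum_id_real, sum_sq_real, Finset.sum_sub_distrib]
  -- function value sums
  have hm0 : (m : ℝ) ≠ 0 := ne_of_gt hmpos
  have hSxs : ∑ i ∈ Finset.range m, f i xs = (m : ℝ) * fstar := by
    have h := hval xs hxs
    field_simp at h
    linarith
  have hS0 : (m : ℝ) * fstar + (m : ℝ) * (α * D) ≤ ∑ i ∈ Finset.range m, f i (x 0) := by
    have h := hsharp (x 0)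
    rw [ge_iff_le, ← hDdef] at h
    have h2 := mul_le_mul_of_nonneg_left h hmpos.le
    have h3 : (m : ℝ) * (1 / (m : ℝ) * ∑ i ∈ Finset.range m, f i (x 0) - fstar)
        = (∑ i ∈ Finset.range m, f i (x 0)) - (m : ℝ) * fstar := by
      field_simp
    rw [h3] at h2
    linarith
  -- combine everything
  have hxm : ‖x m - xs‖ ^ 2 ≤ ‖x 0 - xs‖ ^ 2
      + (2 * μ * ((m : ℝ) * fstar - ((m : ℝ) * fstar + (m : ℝ) * (α * D)))
        + (2 * μ ^ 2 * L ^ 2) * ((m : ℝ) * (m - 1) / 2)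
        + (τ * μ * (2 * D * μ * L)) * ((m : ℝ) * (m - 1) / 2)
        + (τ * μ * (μ ^ 2 * L ^ 2)) * ((m : ℝ) * (m - 1) * (2 * m - 1) / 6)
        + (m : ℝ) * (τ * μ * D ^ 2 + μ ^ 2 * L ^ 2)) := by
    have h1 := hsum m le_rfl
    rw [hclose, hSxs] at hsum_le
    have hmono : 2 * μ * ((m : ℝ) * fstar - ∑ i ∈ Finset.range m, f i (x 0))
        ≤ 2 * μ * ((m : ℝ) * fstar - ((m : ℝ) * fstar + (m : ℝ) * (α * D))) := by
      have : (0:ℝ) ≤ 2 * μ := by linarith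
      nlinarith
    linarith
  have hfinal : Metric.infDist (x m) 𝒳 ^ 2 ≤ ‖x m - xs‖ ^ 2 := by
    have h1 : Metric.infDist (x m) 𝒳 ≤ ‖x m - xs‖ := by
      rw [← dist_eq_norm]; exact Metric.infDist_le_dist_of_mem hxs
    have h2 : 0 ≤ Metric.infDist (x m) 𝒳 := Metric.infDist_nonneg
    nlinarith
  rw [hDnorm] at hxm
  -- final arithmetic
  have hA : (0:ℝ) ≤ τ * μ * (m:ℝ) := by positivity
  have hmid : (τ * μ * (2 * D * μ * L)) * ((m:ℝ) * ((m:ℝ) - 1) / 2)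
      ≤ τ * μ * (m:ℝ) * D ^ 2 / 2 + τ * μ * (m:ℝ) * (((m:ℝ) - 1) ^ 2 * μ ^ 2 * L ^ 2) / 2 := by
    nlinarith [mul_nonneg hA (sq_nonneg (D - ((m:ℝ) - 1) * μ * L))]
  have hc : (m:ℝ) * ((m:ℝ) - 1) * (2 * (m:ℝ) - 1) / 6 + (m:ℝ) * ((m:ℝ) - 1) ^ 2 / 2
      ≤ (m:ℝ) ^ 3 := by nlinarith [hm1]
  have h2 : (0:ℝ) ≤ τ * μ ^ 3 * L ^ 2 := by positivity
  have h56 : (τ * μ * (μ ^ 2 * L ^ 2)) * ((m:ℝ) * ((m:ℝ) - 1) * (2 * (m:ℝ) - 1) / 6)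
        + τ * μ * (m:ℝ) * (((m:ℝ) - 1) ^ 2 * μ ^ 2 * L ^ 2) / 2
      ≤ τ * (m:ℝ) ^ 3 * μ ^ 3 * L ^ 2 := by
    nlinarith [mul_le_mul_of_nonneg_left hc h2]
  nlinarith [hfinal, hxm, hmid, h56, mul_nonneg hA (sq_nonneg D)]
end

section
/- Let α, τ, L be positive reals with α ≤ L, let m ≥ 1 be a natural number, let μ₀ be a real with 0 < μ₀ ≤ α²/(5mτL²), and let ρ ∈ ℝ satisfy ρ̄ ≤ ρ < 1 where ρ̄ = √(1 − 2mτμ₀ + (5m²τ²L²/α²)μ₀²). Then for every natural number k, setting μ = ρᵏμ₀, and for every real D with 0 ≤ D ≤ ρᵏ·α/(2τ), one has (1 + 2mτμ)D² − 2mαμD + m²μ²L² + τm³μ³L² ≤ (ρ^(k+1)·α/(2τ))². -/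
/-!
Write `μ = ρᵏμ₀`, `R = ρᵏα/(2τ)` and `s = mτμ₀ ≤ 1/5`. Then `2mαμ = 4sR` and
`ρ̄²R² = (1 - 2s)R² + (5/4)(mμL)²`, so the claim becomes an inequality between quadratics in `D`
in which `μ₀` enters only through `s`. The left side is convex in `D`, hence on `[0, R]` it is
bounded by its values at the endpoints; there the terms in `(mμL)²` need `s ≤ 1/4` and the
endpoint `D = R` needs `ρᵏ ≤ 1`.
Finally `ρ̄ ≤ ρ`.
-/

lemma quadratic_le_max_of_mem_Icc {a b c R D : ℝ} (ha : 0 ≤ a) (hD : D ∈ Set.Icc 0 R) :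
    a * D ^ 2 + b * D + c ≤ max c (a * R ^ 2 + b * R + c) := by
  obtain ⟨hD0, hDR⟩ := hD
  have hchord : a * D ^ 2 + b * D ≤ D * (a * R + b) := by nlinarith [mul_nonneg ha hD0]
  rcases le_total 0 (a * R + b) with hslope | hslope
  · have : D * (a * R + b) ≤ R * (a * R + b) := mul_le_mul_of_nonneg_right hDR hslope
    exact le_max_of_le_right (by nlinarith)
  · have : D * (a * R + b) ≤ 0 := mul_nonpos_of_nonneg_of_nonpos hD0 hslope
    exact le_max_of_le_left (by linarith)

lemma recursion_le_of_mem_Icc {s p q R D : ℝ} (hs₀ : 0 ≤ s) (hs : s ≤ 1 / 4)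
    (hp₀ : 0 ≤ p) (hp : p ≤ 1) (hD : D ∈ Set.Icc 0 R) :
    (1 + 2 * s * p) * D ^ 2 - 4 * s * R * D + (1 + s * p) * q ^ 2
      ≤ (1 - 2 * s) * R ^ 2 + 5 / 4 * q ^ 2 := by
  have hsp : s * p ≤ s := mul_le_of_le_one_right hs₀ hp
  have hq : (1 + s * p) * q ^ 2 ≤ 5 / 4 * q ^ 2 := by nlinarith [sq_nonneg q]
  have hmax := quadratic_le_max_of_mem_Icc (b := -4 * s * R) (c := 0)
    (by positivity : 0 ≤ 1 + 2 * s * p) hD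
  have hend : max 0 ((1 + 2 * s * p) * R ^ 2 + -4 * s * R * R + 0) ≤ (1 - 2 * s) * R ^ 2 :=
    max_le (by nlinarith [sq_nonneg R]) (by nlinarith [sq_nonneg R])
  linarith

theorem geometric_stepsize_induction_step_general
    (α τ L : ℝ) (hα : 0 < α) (hτ : 0 < τ) (hL : 0 < L) (hαL : α ≤ L)
    (m : ℕ)
    (μ₀ : ℝ) (hμ₀ : 0 < μ₀) (hμ₀' : μ₀ ≤ α ^ 2 / (5 * m * τ * L ^ 2))
    (ρ : ℝ)
    (hρ₁ : Real.sqrt (1 - 2 * m * τ * μ₀ + (5 * m ^ 2 * τ ^ 2 * L ^ 2 / α ^ 2) * μ₀ ^ 2) ≤ ρ)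
    (hρ₂ : ρ < 1) :
    ∀ k : ℕ, ∀ D : ℝ, 0 ≤ D → D ≤ ρ ^ k * (α / (2 * τ)) →
      (1 + 2 * m * τ * (ρ ^ k * μ₀)) * D ^ 2 - 2 * m * α * (ρ ^ k * μ₀) * D
          + m ^ 2 * (ρ ^ k * μ₀) ^ 2 * L ^ 2 + τ * m ^ 3 * (ρ ^ k * μ₀) ^ 3 * L ^ 2
        ≤ (ρ ^ (k + 1) * (α / (2 * τ))) ^ 2 := by
  intro k D hD0 hD
  obtain ⟨hρ₀, hρsq⟩ := Real.sqrt_le_iff.mp hρ₁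
  have hstep : 5 * m * τ * μ₀ ≤ 1 := by
    have h := mul_le_of_le_div₀ (sq_nonneg α) (by positivity) hμ₀'
    refine le_of_mul_le_mul_right ?_ (by positivity : 0 < L ^ 2)
    nlinarith [pow_le_pow_left₀ hα.le hαL 2]
  have key := recursion_le_of_mem_Icc (s := m * τ * μ₀) (q := m * (ρ ^ k * μ₀) * L)
    (by positivity) (by linarith) (pow_nonneg hρ₀ k) (pow_le_one₀ hρ₀ hρ₂.le) ⟨hD0, hD⟩
  calc _ = (1 + 2 * (m * τ * μ₀) * ρ ^ k) * D ^ 2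
          - 4 * (m * τ * μ₀) * (ρ ^ k * (α / (2 * τ))) * D
          + (1 + m * τ * μ₀ * ρ ^ k) * (m * (ρ ^ k * μ₀) * L) ^ 2 := by
        field_simp
        ring
    _ ≤ (1 - 2 * (m * τ * μ₀)) * (ρ ^ k * (α / (2 * τ))) ^ 2
          + 5 / 4 * (m * (ρ ^ k * μ₀) * L) ^ 2 := key
    _ = (1 - 2 * m * τ * μ₀ + (5 * m ^ 2 * τ ^ 2 * L ^ 2 / α ^ 2) * μ₀ ^ 2)
          * (ρ ^ k * (α / (2 * τ))) ^ 2 := by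
        field_simp
        ring
    _ ≤ ρ ^ 2 * (ρ ^ k * (α / (2 * τ))) ^ 2 := by gcongr
    _ = _ := by ring

/-- Arithmetic induction step in the proof of Theorem 4.1: the per-cycle recursion with
geometrically diminishing stepsize preserves the linear-rate bound. -/
theorem geometric_stepsize_induction_step
    (α τ L : ℝ) (hα : 0 < α) (hτ : 0 < τ) (hL : 0 < L) (hαL : α ≤ L)
    (m : ℕ) (hm : 1 ≤ m)
    (μ₀ : ℝ) (hμ₀ : 0 < μ₀) (hμ₀' : μ₀ ≤ α ^ 2 / (5 * m * τ * L ^ 2))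
    (ρ : ℝ)
    (hρ₁ : Real.sqrt (1 - 2 * m * τ * μ₀ + (5 * m ^ 2 * τ ^ 2 * L ^ 2 / α ^ 2) * μ₀ ^ 2) ≤ ρ)
    (hρ₂ : ρ < 1) :
    ∀ k : ℕ, ∀ D : ℝ, 0 ≤ D → D ≤ ρ ^ k * (α / (2 * τ)) →
      (1 + 2 * m * τ * (ρ ^ k * μ₀)) * D ^ 2 - 2 * m * α * (ρ ^ k * μ₀) * D
          + m ^ 2 * (ρ ^ k * μ₀) ^ 2 * L ^ 2 + τ * m ^ 3 * (ρ ^ k * μ₀) ^ 3 * L ^ 2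
        ≤ (ρ ^ (k + 1) * (α / (2 * τ))) ^ 2 :=
  geometric_stepsize_induction_step_general α τ L hα hτ hL hαL m μ₀ hμ₀ hμ₀' ρ hρ₁ hρ₂
end

section
/- Let E be a finite-dimensional real inner product space, m ≥ 1 a natural number, τ > 0, and f₁, …, f_m : E → ℝ each Lipschitz with constant L > 0. Let f = (1/m)∑ᵢ fᵢ, let 𝒳 ⊆ E be nonempty and closed, and f⋆ ∈ ℝ with f(x⋆) = f⋆ for all x⋆ ∈ 𝒳 and f(x) − f⋆ ≥ α·dist(x, 𝒳) for all x ∈ E, where 0 < α ≤ L. Let 0 < μ₀ ≤ α²/(5mτL²) and ρ̄ ≤ ρ < 1 with ρ̄ = √(1 − 2mτμ₀ + (5m²τ²L²/α²)μ₀²). Let X : ℕ → E be a sequence such that for each k there exist inner iterates y_{k,0}, …, y_{k,m} ∈ E with y_{k,0} = X_k, X_{k+1} = y_{k,m}, and y_{k,i} = y_{k,i−1} − ρᵏμ₀·g_{k,i} for i = 1, …, m, where each g_{k,i} ∈ E satisfies ‖g_{k,i}‖ ≤ L and fᵢ(w) ≥ fᵢ(y_{k,i−1}) + ⟨g_{k,i},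 w − y_{k,i−1}⟩ − (τ/2)‖w − y_{k,i−1}‖² for all w ∈ E. If dist(X₀, 𝒳) ≤ α/(2τ), then dist(X_k, 𝒳) ≤ ρᵏ·α/(2τ) for every k ≥ 0. -/
open scoped RealInnerProductSpace

private lemma sum_range_cast_real (n : ℕ) :
    (∑ j ∈ Finset.range n, (j : ℝ)) * 2 = (n : ℝ) ^ 2 - n := by
  induction n with
  | zero => simp
  | succ n ih =>
    rw [Finset.sum_range_succ, add_mul, ih]
    push_cast
    ring

set_option maxHeartbeats 1000000 in
/-- Theorem 4.1 for incremental (sub)-gradient descent: R-linear convergence to the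
optimal solution set under weak convexity and sharpness, with geometrically
diminishing stepsize and good initialization. -/
theorem incremental_subgradient_linear_convergence
    {E : Type*} [NormedAddCommGroup E] [InnerProductSpace ℝ E] [FiniteDimensional ℝ E]
    (m : ℕ) (hm : 1 ≤ m) (τ L α : ℝ) (hτ : 0 < τ) (hL : 0 < L) (hα : 0 < α) (hαL : α ≤ L)
    (f : ℕ → E → ℝ)
    (hlip : ∀ i < m, ∀ x y : E, |f i x - f i y| ≤ L * ‖x - y‖)
    (𝒳 : Set E) (hne : 𝒳.Nonempty) (hcl : IsClosed 𝒳) (fstar : ℝ)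
    (hval : ∀ xs ∈ 𝒳, (1 / (m : ℝ)) * ∑ i ∈ Finset.range m, f i xs = fstar)
    (hsharp : ∀ x : E,
      (1 / (m : ℝ)) * ∑ i ∈ Finset.range m, f i x - fstar ≥ α * Metric.infDist x 𝒳)
    (μ₀ ρ : ℝ) (hμ₀ : 0 < μ₀) (hμ₀' : μ₀ ≤ α ^ 2 / (5 * m * τ * L ^ 2))
    (hρ₁ : Real.sqrt (1 - 2 * m * τ * μ₀ + (5 * m ^ 2 * τ ^ 2 * L ^ 2 / α ^ 2) * μ₀ ^ 2) ≤ ρ)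
    (hρ₂ : ρ < 1)
    (X : ℕ → E) (y g : ℕ → ℕ → E)
    (hy0 : ∀ k : ℕ, y k 0 = X k) (hXs : ∀ k : ℕ, X (k + 1) = y k m)
    (hupd : ∀ k : ℕ, ∀ i < m, y k (i + 1) = y k i - (ρ ^ k * μ₀) • g k i)
    (hg : ∀ k : ℕ, ∀ i < m, ‖g k i‖ ≤ L)
    (hsub : ∀ k : ℕ, ∀ i < m, ∀ w : E,
      f i w ≥ f i (y k i) + ⟪g k i, w - y k i⟫ - τ / 2 * ‖w - y k i‖ ^ 2)
    (hinit : Metric.infDist (X 0) 𝒳 ≤ α / (2 * τ)) :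
    ∀ k : ℕ, Metric.infDist (X k) 𝒳 ≤ ρ ^ k * (α / (2 * τ)) := by
  have hm' : (1:ℝ) ≤ (m:ℝ) := by exact_mod_cast hm
  have hmpos : (0:ℝ) < (m:ℝ) := by linarith
  have hα0 : α ≠ 0 := ne_of_gt hα
  have hτ0 : τ ≠ 0 := ne_of_gt hτ
  have h4τ : (0:ℝ) < 4 * τ ^ 2 := by positivity
  -- basic scalar consequences of the stepsize bound
  have hA : (m:ℝ) * τ * μ₀ * L ^ 2 ≤ α ^ 2 / 5 := by
    have h5 : (0:ℝ) < 5 * (m:ℝ) * τ * L ^ 2 := by positivity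
    have h := (le_div_iff₀ h5).mp hμ₀'
    linarith [h]
  have hαL2 : α ^ 2 ≤ L ^ 2 := pow_le_pow_left₀ hα.le hαL 2
  have hB : (m:ℝ) * τ * μ₀ ≤ 1 / 5 :=
    le_of_mul_le_mul_right (by linarith : (m:ℝ) * τ * μ₀ * L ^ 2 ≤ 1 / 5 * L ^ 2)
      (pow_pos hL 2)
  have hm2 : (m:ℝ) ^ 2 * τ ^ 2 * μ₀ ^ 2 * L ^ 2 ≤ α ^ 2 / 25 := by
    have h := mul_le_mul hB hA (by positivity) (by norm_num)
    linarith [h]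
  set Q : ℝ := 1 - 2 * (m:ℝ) * τ * μ₀ + 5 * (m:ℝ) ^ 2 * τ ^ 2 * L ^ 2 / α ^ 2 * μ₀ ^ 2
    with hQdef
  clear_value Q
  have hQ0 : (0:ℝ) ≤ 5 * (m:ℝ) ^ 2 * τ ^ 2 * L ^ 2 / α ^ 2 * μ₀ ^ 2 := by positivity
  have hQ35 : (3/5 : ℝ) ≤ Q := by rw [hQdef]; linarith [hQ0, hB]
  have hQpos : (0:ℝ) < Q := by linarith
  have hρpos : 0 < ρ := lt_of_lt_of_le (Real.sqrt_pos.mpr hQpos) hρ₁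
  have hρsq : Q ≤ ρ ^ 2 := by
    have hsq : Real.sqrt Q ^ 2 = Q := Real.sq_sqrt hQpos.le
    calc Q = Real.sqrt Q ^ 2 := hsq.symm
      _ ≤ ρ ^ 2 := by
          rw [sq, sq]
          exact mul_self_le_mul_self (Real.sqrt_nonneg Q) hρ₁
  intro k
  induction k with
  | zero => simpa using hinit
  | succ k ih =>
    obtain ⟨xs, hxsm, hxd⟩ := hcl.exists_infDist_eq_dist hne (X k)
    set r : ℝ := ρ ^ k with hrdef
    clear_value r
    have hr0 : 0 < r := by rw [hrdef]; exact pow_pos hρpos k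
    have hr1 : r ≤ 1 := by rw [hrdef]; exact pow_le_one₀ hρpos.le hρ₂.le
    set μ : ℝ := r * μ₀ with hμdef
    clear_value μ
    have hμ0 : 0 < μ := by rw [hμdef]; exact mul_pos hr0 hμ₀
    set d : ℝ := ‖X k - xs‖ with hddef
    clear_value d
    have hd0 : (0:ℝ) ≤ d := by rw [hddef]; exact norm_nonneg _
    have hdist : Metric.infDist (X k) 𝒳 = d := by rw [hxd, dist_eq_norm, hddef]
    set D : ℝ := r * (α / (2 * τ)) with hDdef
    clear_value D
    have hD0 : (0:ℝ) ≤ D := by rw [hDdef]; positivity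
    have hdD : d ≤ D := by rw [hdist] at ih; exact ih
    have hupdk : ∀ i < m, y k (i + 1) = y k i - μ • g k i := by
      intro i hi; rw [hμdef, hrdef]; exact hupd k i hi
    -- drift of inner iterates
    have drift : ∀ i, i ≤ m → ‖y k i - X k‖ ≤ (i:ℝ) * (μ * L) := by
      intro i
      induction i with
      | zero => intro _; simp [hy0 k]
      | succ n ihn =>
        intro hle
        have hn : n < m := Nat.lt_of_succ_le hle
        have h1 := ihn (Nat.le_of_lt hn)
        rw [hupdk n hn]
        have e : y k n - μ • g k n - X k = (y k n - X k) - μ • g k n := by abel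
        rw [e]
        have h2 : ‖(y k n - X k) - μ • g k n‖ ≤ ‖y k n - X k‖ + ‖μ • g k n‖ :=
          norm_sub_le _ _
        have h3 : ‖μ • g k n‖ = μ * ‖g k n‖ := by
          rw [norm_smul, Real.norm_eq_abs, abs_of_pos hμ0]
        have h4 : ‖g k n‖ ≤ L := hg k n hn
        push_cast
        have h5 : μ * ‖g k n‖ ≤ μ * L := mul_le_mul_of_nonneg_left h4 hμ0.le
        linarith [h1, h2, h3, h5]
    -- one-step contraction
    have step : ∀ i, i < m →
        ‖y k (i+1) - xs‖ ^ 2 ≤ ‖y k i - xs‖ ^ 2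
          + (2 * μ * (f i xs - f i (y k i)) + μ * τ * ‖y k i - xs‖ ^ 2 + μ ^ 2 * L ^ 2) := by
      intro i hi
      have hrw : y k (i+1) - xs = (y k i - xs) - μ • g k i := by
        rw [hupdk i hi]; abel
      have h1 : ‖μ • g k i‖ ^ 2 = μ ^ 2 * ‖g k i‖ ^ 2 := by
        rw [norm_smul, Real.norm_eq_abs, mul_pow, sq_abs]
      have hsq : ‖y k (i+1) - xs‖ ^ 2
          = ‖y k i - xs‖ ^ 2 - 2 * (μ * ⟪g k i, y k i - xs⟫) + μ ^ 2 * ‖g k i‖ ^ 2 := by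
        rw [hrw, norm_sub_sq_real, real_inner_smul_right, h1,
          real_inner_comm (y k i - xs) (g k i)]
      have hsi := hsub k i hi xs
      have e2 : xs - y k i = -(y k i - xs) := by abel
      rw [e2, inner_neg_right, norm_neg] at hsi
      have hginn : -⟪g k i, y k i - xs⟫ ≤ f i xs - f i (y k i) + τ/2 * ‖y k i - xs‖^2 := by
        linarith [hsi]
      have hgL : ‖g k i‖ ^ 2 ≤ L ^ 2 :=
        pow_le_pow_left₀ (norm_nonneg _) (hg k i hi) 2
      rw [hsq]
      linarith [mul_le_mul_of_nonneg_left hginn (by linarith : (0:ℝ) ≤ 2*μ),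
                mul_le_mul_of_nonneg_left hgL (sq_nonneg μ)]
    -- telescoped bound
    have tel : ∀ i, i ≤ m → ‖y k i - xs‖ ^ 2 ≤ d ^ 2
        + ∑ j ∈ Finset.range i,
            (2 * μ * (f j xs - f j (y k j)) + μ * τ * ‖y k j - xs‖ ^ 2 + μ ^ 2 * L ^ 2) := by
      intro i
      induction i with
      | zero => intro _; simp [hy0 k, hddef]
      | succ n ihn =>
        intro hle
        have hn : n < m := Nat.lt_of_succ_le hle
        have h1 := ihn hn.le
        have h2 := step n hn
        rw [Finset.sum_range_succ]
        linarith
    have hyd : ∀ j, j < m → ‖y k j - xs‖ ≤ d + (j:ℝ) * (μ * L) := by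
      intro j hj
      have e : y k j - xs = (y k j - X k) + (X k - xs) := by abel
      rw [e, hddef]
      have h1 := norm_add_le (y k j - X k) (X k - xs)
      have h2 := drift j hj.le
      linarith
    -- per-term bound on the summands
    have sumbound : ∀ j ∈ Finset.range m,
        2 * μ * (f j xs - f j (y k j)) + μ * τ * ‖y k j - xs‖ ^ 2 + μ ^ 2 * L ^ 2
        ≤ 2 * μ * (f j xs - f j (X k)) + (μ * τ * d ^ 2 + μ ^ 2 * L ^ 2)
          + (2 * μ ^ 2 * L ^ 2 + 2 * μ ^ 2 * τ * L * d + μ ^ 3 * τ * L ^ 2 * m) * (j:ℝ) := by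
      intro j hjr
      have hj : j < m := Finset.mem_range.mp hjr
      have h1 := drift j hj.le
      have h2 := hyd j hj
      have hlipj := hlip j hj (y k j) (X k)
      have h3 : f j (X k) - f j (y k j) ≤ L * ((j:ℝ) * (μ * L)) := by
        have habs : f j (X k) - f j (y k j) ≤ |f j (y k j) - f j (X k)| := by
          rw [abs_sub_comm]; exact le_abs_self _
        have h4 := mul_le_mul_of_nonneg_left h1 hL.le
        linarith [hlipj]
      have h4 : ‖y k j - xs‖ ^ 2 ≤ (d + (j:ℝ) * (μ * L)) ^ 2 :=
        pow_le_pow_left₀ (norm_nonneg _) h2 2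
      have h5 : (j:ℝ) ^ 2 ≤ (m:ℝ) * (j:ℝ) := by
        have hjm : (j:ℝ) ≤ (m:ℝ) := by exact_mod_cast hj.le
        have h6 := mul_le_mul_of_nonneg_right hjm ((Nat.cast_nonneg j : (0:ℝ) ≤ j))
        calc (j:ℝ) ^ 2 = (j:ℝ) * (j:ℝ) := sq ((j:ℝ))
          _ ≤ (m:ℝ) * (j:ℝ) := h6
      have hμτ : (0:ℝ) ≤ μ * τ := mul_nonneg hμ0.le hτ.le
      have hμ3 : (0:ℝ) ≤ μ ^ 3 * τ * L ^ 2 := by positivity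
      have e4 := mul_le_mul_of_nonneg_left h4 hμτ
      have e3 := mul_le_mul_of_nonneg_left h3 (by linarith : (0:ℝ) ≤ 2*μ)
      have e5 := mul_le_mul_of_nonneg_left h5 hμ3
      linarith [e4, e3, e5]
    have hsum1 := Finset.sum_le_sum sumbound
    have telm := tel m le_rfl
    set S1 : ℝ := ∑ j ∈ Finset.range m, (j:ℝ) with hS1def
    clear_value S1
    have hS1 : S1 * 2 = (m:ℝ) ^ 2 - m := by rw [hS1def]; exact sum_range_cast_real m
    have hS1v : S1 = ((m:ℝ) ^ 2 - m) / 2 := by linarith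
    have hexp : ∑ j ∈ Finset.range m,
        (2 * μ * (f j xs - f j (X k)) + (μ * τ * d ^ 2 + μ ^ 2 * L ^ 2)
          + (2 * μ ^ 2 * L ^ 2 + 2 * μ ^ 2 * τ * L * d + μ ^ 3 * τ * L ^ 2 * m) * (j:ℝ))
        = 2 * μ * ((∑ j ∈ Finset.range m, f j xs) - ∑ j ∈ Finset.range m, f j (X k))
          + (m:ℝ) * (μ * τ * d ^ 2 + μ ^ 2 * L ^ 2)
          + (2 * μ ^ 2 * L ^ 2 + 2 * μ ^ 2 * τ * L * d + μ ^ 3 * τ * L ^ 2 * m) * S1 := by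
      rw [hS1def, Finset.sum_add_distrib, Finset.sum_add_distrib, ← Finset.mul_sum,
        ← Finset.mul_sum, Finset.sum_sub_distrib, Finset.sum_const, Finset.card_range,
        nsmul_eq_mul]
    -- sharpness and optimal value
    have hFx : (∑ j ∈ Finset.range m, f j xs) = (m:ℝ) * fstar := by
      have h := hval xs hxsm
      have hm0 : (m:ℝ) ≠ 0 := ne_of_gt hmpos
      field_simp at h
      linarith
    have hFk : (m:ℝ) * fstar + (m:ℝ) * (α * d) ≤ ∑ j ∈ Finset.range m, f j (X k) := by
      have h := hsharp (X k)
      rw [hdist] at h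
      have h2 : (m:ℝ) * ((1/(m:ℝ)) * ∑ j ∈ Finset.range m, f j (X k))
          = ∑ j ∈ Finset.range m, f j (X k) := by
        field_simp
      have h3 := mul_le_mul_of_nonneg_left
        (by linarith [h] : fstar + α * d ≤ (1/(m:ℝ)) * ∑ j ∈ Finset.range m, f j (X k))
        hmpos.le
      have h4 : (m:ℝ) * (fstar + α * d) = (m:ℝ) * fstar + (m:ℝ) * (α * d) := by ring
      linarith [h3, h2, h4]
    -- the master bound on the outer step
    have hTb : ‖X (k+1) - xs‖ ^ 2 ≤ (1 + (m:ℝ)*μ*τ) * d^2 - 2*(m:ℝ)*μ*α*d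
        + (m:ℝ)*μ^2*L^2
        + (2*μ^2*L^2 + 2*μ^2*τ*L*d + μ^3*τ*L^2*(m:ℝ)) * S1 := by
      have h0 : ‖X (k+1) - xs‖ ^ 2 = ‖y k m - xs‖ ^ 2 := by rw [hXs k]
      rw [hexp] at hsum1
      have hcomb : ‖X (k+1) - xs‖ ^ 2 ≤ d ^ 2
          + (2 * μ * ((∑ j ∈ Finset.range m, f j xs) - ∑ j ∈ Finset.range m, f j (X k))
            + (m:ℝ) * (μ * τ * d ^ 2 + μ ^ 2 * L ^ 2)
            + (2 * μ ^ 2 * L ^ 2 + 2 * μ ^ 2 * τ * L * d + μ ^ 3 * τ * L ^ 2 * m) * S1) := by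
        rw [h0]; linarith [telm, hsum1]
      have hFx2 : 2*μ*((∑ j ∈ Finset.range m, f j xs)) = 2*μ*((m:ℝ)*fstar) := by
        rw [hFx]
      linarith [hcomb, mul_le_mul_of_nonneg_left hFk (by linarith : (0:ℝ) ≤ 2*μ), hFx2]
    -- numerical core inequalities
    have hR1 : (Q * D^2) * (4*τ^2)
        = r^2*α^2 - 2*(m:ℝ)*τ*μ₀*r^2*α^2 + 5*(m:ℝ)^2*τ^2*L^2*μ₀^2*r^2 := by
      rw [hQdef, hDdef]; field_simp; ring
    -- auxiliary polynomial facts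
    have hF3 : (m:ℝ)*μ₀*τ*α^2*r^3 ≤ (m:ℝ)*μ₀*τ*α^2*r^2 := by
      have e := mul_nonneg (by positivity : (0:ℝ) ≤ (m:ℝ)*μ₀*τ*α^2*r^2)
        (by linarith : (0:ℝ) ≤ 1 - r)
      linarith [e]
    have hF1a : 2*((m:ℝ)^2 - m)*μ₀^2*τ^2*L*α*r^3 ≤ 2*(m:ℝ)^2*μ₀^2*τ^2*L*α*r^2 := by
      linarith [(by positivity : (0:ℝ) ≤ 2*(m:ℝ)*μ₀^2*τ^2*L*α*r^3),
        mul_nonneg (by positivity : (0:ℝ) ≤ 2*(m:ℝ)^2*μ₀^2*τ^2*L*α*r^2)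
          (by linarith : (0:ℝ) ≤ 1 - r)]
    have hF1b : 2*(m:ℝ)^2*μ₀^2*τ^2*L*α*r^2
        ≤ (m:ℝ)^2*μ₀^2*τ^2*L^2*r^2 + (m:ℝ)^2*μ₀^2*τ^2*α^2*r^2 := by
      linarith [mul_nonneg (by positivity : (0:ℝ) ≤ (m:ℝ)^2*μ₀^2*τ^2*r^2)
        (sq_nonneg (L - α))]
    have hF1c : (m:ℝ)^2*μ₀^2*τ^2*α^2*r^2 ≤ (1/5)*(m:ℝ)*μ₀*τ*α^2*r^2 := by
      linarith [mul_le_mul_of_nonneg_left hB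
        (by positivity : (0:ℝ) ≤ (m:ℝ)*μ₀*τ*α^2*r^2)]
    have hF2a : 2*((m:ℝ)^3 - (m:ℝ)^2)*μ₀^3*τ^3*L^2*r^3 ≤ 2*(m:ℝ)^3*μ₀^3*τ^3*L^2*r^2 := by
      linarith [(by positivity : (0:ℝ) ≤ 2*(m:ℝ)^2*μ₀^3*τ^3*L^2*r^3),
        mul_nonneg (by positivity : (0:ℝ) ≤ 2*(m:ℝ)^3*μ₀^3*τ^3*L^2*r^2)
          (by linarith : (0:ℝ) ≤ 1 - r)]
    have hF2b : 2*(m:ℝ)^3*μ₀^3*τ^3*L^2*r^2 ≤ (2/25)*(m:ℝ)*μ₀*τ*α^2*r^2 := by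
      linarith [mul_le_mul_of_nonneg_left hm2
        (by positivity : (0:ℝ) ≤ 2*(m:ℝ)*μ₀*τ*r^2)]
    have hG2 : 2*(m:ℝ)*τ*μ₀*r^2*α^2 ≤ (2/5)*r^2*α^2 := by
      linarith [mul_le_mul_of_nonneg_left hB (by positivity : (0:ℝ) ≤ 2*r^2*α^2)]
    have hG3 : (2/25)*(m:ℝ)*μ₀*τ*α^2*r^2 ≤ (2/125)*α^2*r^2 := by
      linarith [mul_le_mul_of_nonneg_left hB (by positivity : (0:ℝ) ≤ (2/25)*α^2*r^2)]
    have hph : (0:ℝ) ≤ (m:ℝ)^2*τ^2*L^2*μ₀^2*r^2 := by positivity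
    have hph2 : (0:ℝ) ≤ (m:ℝ)*μ₀*τ*α^2*r^2 := by positivity
    -- d = 0 endpoint
    have hKcore : (m:ℝ)*μ^2*L^2 + (2*μ^2*L^2 + μ^3*τ*L^2*(m:ℝ)) * S1 ≤ Q * D^2 := by
      refine le_of_mul_le_mul_right ?_ h4τ
      have hL0 : ((m:ℝ)*μ^2*L^2 + (2*μ^2*L^2 + μ^3*τ*L^2*(m:ℝ)) * S1) * (4*τ^2)
          = 4*(m:ℝ)^2*r^2*μ₀^2*L^2*τ^2 + 2*((m:ℝ)^3 - (m:ℝ)^2)*r^3*μ₀^3*τ^3*L^2 := by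
        rw [hS1v, hμdef]; field_simp; ring
      rw [hL0, hR1]
      linarith [hF2a, hF2b, hG2, hG3, hph]
    -- d = D endpoint
    have hKDcore : (1 + (m:ℝ)*μ*τ)*D^2 - (2*(m:ℝ)*μ*α - 2*μ^2*τ*L*S1)*D
        + ((m:ℝ)*μ^2*L^2 + (2*μ^2*L^2 + μ^3*τ*L^2*(m:ℝ)) * S1) ≤ Q * D^2 := by
      refine le_of_mul_le_mul_right ?_ h4τ
      have hL1 : ((1 + (m:ℝ)*μ*τ)*D^2 - (2*(m:ℝ)*μ*α - 2*μ^2*τ*L*S1)*D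
          + ((m:ℝ)*μ^2*L^2 + (2*μ^2*L^2 + μ^3*τ*L^2*(m:ℝ)) * S1)) * (4*τ^2)
          = (1 + (m:ℝ)*r*μ₀*τ)*(r^2*α^2)
            - (2*(m:ℝ)*r*μ₀*α - ((m:ℝ)^2 - m)*r^2*μ₀^2*τ*L)*(2*τ*r*α)
            + 4*(m:ℝ)^2*r^2*μ₀^2*L^2*τ^2 + 2*((m:ℝ)^3 - (m:ℝ)^2)*r^3*μ₀^3*τ^3*L^2 := by
        rw [hS1v, hμdef, hDdef]; field_simp; ring
      rw [hL1, hR1]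
      linarith [hF1a, hF1b, hF1c, hF2a, hF2b, hF3, hph2, hph]
    -- combine via convexity of the quadratic in d
    have key : ‖X (k+1) - xs‖ ^ 2 ≤ Q * D^2 := by
      rcases le_or_gt ((1 + (m:ℝ)*μ*τ)*d) (2*(m:ℝ)*μ*α - 2*μ^2*τ*L*S1) with hcase | hcase
      · have hquad : (1 + (m:ℝ)*μ*τ)*d^2 - 2*(m:ℝ)*μ*α*d + 2*μ^2*τ*L*S1*d ≤ 0 := by
          linarith [mul_nonneg hd0 (sub_nonneg.mpr hcase)]
        linarith [hTb, hquad, hKcore]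
      · have hsnn : (0:ℝ) ≤ (m:ℝ)*μ*τ := mul_nonneg (mul_nonneg hmpos.le hμ0.le) hτ.le
        have hplus : (0:ℝ) ≤ (1 + (m:ℝ)*μ*τ)*(D + d) - (2*(m:ℝ)*μ*α - 2*μ^2*τ*L*S1) := by
          linarith [hcase.le, hD0, mul_nonneg hsnn hD0]
        have hmono : (1 + (m:ℝ)*μ*τ)*d^2 - (2*(m:ℝ)*μ*α - 2*μ^2*τ*L*S1)*d
            ≤ (1 + (m:ℝ)*μ*τ)*D^2 - (2*(m:ℝ)*μ*α - 2*μ^2*τ*L*S1)*D := by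
          linarith [mul_nonneg (sub_nonneg.mpr hdD) hplus]
        linarith [hTb, hmono, hKDcore]
    -- conclude
    have hfin2 : ‖X (k+1) - xs‖ ^ 2 ≤ (ρ * D)^2 := by
      have hD2 : (0:ℝ) ≤ D^2 := sq_nonneg D
      calc ‖X (k+1) - xs‖ ^ 2 ≤ Q * D^2 := key
        _ ≤ ρ^2 * D^2 := mul_le_mul_of_nonneg_right hρsq hD2
        _ = (ρ * D)^2 := by ring
    have hρD : (0:ℝ) ≤ ρ * D := mul_nonneg hρpos.le hD0
    have hnorm : ‖X (k+1) - xs‖ ≤ ρ * D :=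
      le_of_pow_le_pow_left₀ (by norm_num) hρD hfin2
    calc Metric.infDist (X (k+1)) 𝒳 ≤ dist (X (k+1)) xs :=
          Metric.infDist_le_dist_of_mem hxsm
      _ = ‖X (k+1) - xs‖ := by rw [dist_eq_norm]
      _ ≤ ρ * D := hnorm
      _ = ρ^(k+1) * (α / (2 * τ)) := by rw [hDdef, hrdef]; ring
end

section
/- Let E be a real inner product space, m ≥ 1 a natural number, τ ≥ 0, τ̂ > 2τ, L > 0, N a natural number, and μ = 1/(m·√(N+1)). Let f₁, …, f_m : E → ℝ each be τ-weakly convex and Lipschitz with constant L, and let f = (1/m)∑ᵢ fᵢ. Let P : E → E be such that for every x ∈ E, P x is a global minimizer of y ↦ f(y) + (τ̂/2)‖y − x‖², define the Moreau envelope F(x) = f(P x) + (τ̂/2)‖P x − x‖², and suppose there is Finf ∈ ℝ with F(x) ≥ Finf for all x ∈ E. Let X₀, X₁, …, X_{N+1} ∈ E be such that for each k ≤ N there exist inner iterates y_{k,0}, …, y_{k,m} with y_{k,0} = X_k, X_{k+1} = y_{k,m}, and y_{k,i} = y_{k,i−1} − μ·g_{k,i} for i = 1, …, m, where each g_{k,i}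 ∈ E satisfies ‖g_{k,i}‖ ≤ L and fᵢ(w) ≥ fᵢ(y_{k,i−1}) + ⟨g_{k,i}, w − y_{k,i−1}⟩ − (τ/2)‖w − y_{k,i−1}‖² for all w ∈ E. Then min over 0 ≤ k ≤ N of τ̂²‖X_k − P X_k‖² is at most [τ̂(F(X₀) − Finf) + (1 + τ̂/(τ̂ − τ))·τ̂²L²]/((τ̂/2 − τ)·√(N+1)) + (1 + τ̂/(τ̂ − τ))²·τ·τ̂²L²/((τ̂/2 − τ)·(N+1)). -/
/-!
A full pass of the incremental method keeps every inner iterate within `s L` of its starting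
point `x`, where `s = m μ`, so up to `O(s²)` errors it acts as one weak-subgradient step of size
`s` on the average `f̄ = (1 / m) ∑ fᵢ`. Measured against the proximal point `P x`, this step shrinks the squared
distance by `2 s (f̄ (P x) - f̄ x) ≤ -s τh ‖x - P x‖²`, and since the Moreau envelope at the new
iterate is at most its value at `P x`, the envelope drops by `τh s (τh / 2 - τ) ‖x - P x‖²`
up to `O(s²)`. Telescoping over the `N + 1` passes with `s = 1 / √(N + 1)` gives the rate.
-/

open scoped RealInnerProductSpace
open Finset

theorem le_add_sum_of_forall_succ_le {α : Type*} [AddCommMonoid α] [PartialOrder α]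
    [IsOrderedAddMonoid α] {a b : ℕ → α} {n : ℕ} (h : ∀ i < n, a (i + 1) ≤ a i + b i) :
    a n ≤ a 0 + ∑ i ∈ range n, b i := by
  induction n with
  | zero => simp
  | succ n ih =>
    rw [sum_range_succ, ← add_assoc]
    exact (h n n.lt_succ_self).trans
      (add_le_add_left (ih fun i hi => h i (hi.trans n.lt_succ_self)) _)

theorem exists_le_of_forall_succ_le_sub_add {a d : ℕ → ℝ} {N : ℕ} {c e b : ℝ} (hc : 0 < c)
    (hstep : ∀ k ≤ N, a (k + 1) ≤ a k - c * d k + e) (hb : b ≤ a (N + 1)) :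
    ∃ k ≤ N, d k ≤ (a 0 - b) / ((N + 1) * c) + e / c := by
  have htel := le_add_sum_of_forall_succ_le (a := a) (b := fun k => e - c * d k) (n := N + 1)
    fun k hk => by linarith [hstep k (Nat.lt_succ_iff.mp hk)]
  have hcsum : c * ∑ k ∈ range (N + 1), d k ≤ a 0 - b + (N + 1) * e := by
    simp only [sum_sub_distrib, sum_const, card_range, nsmul_eq_mul, ← mul_sum] at htel
    push_cast at htel
    linarith
  have hsum : ∑ k ∈ range (N + 1), d k ≤
      ∑ _k ∈ range (N + 1), ((a 0 - b) / ((N + 1) * c) + e / c) := by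
    rw [sum_const, card_range, nsmul_eq_mul]
    refine ((le_div_iff₀' hc).mpr hcsum).trans_eq ?_
    push_cast
    field_simp
  obtain ⟨k, hk, hle⟩ := exists_le_of_sum_le nonempty_range_add_one hsum
  exact ⟨k, Nat.lt_succ_iff.mp (mem_range.mp hk), hle⟩

section IncrementalPass

variable {E : Type*} [NormedAddCommGroup E] [InnerProductSpace ℝ E]

def IsWeakSubgradient (τ : ℝ) (φ : E → ℝ) (x g : E) : Prop :=
  ∀ w, φ w ≥ φ x + ⟪g, w - x⟫ - τ / 2 * ‖w - x‖ ^ 2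

theorem norm_sub_initial_le_of_steps {y g : ℕ → E} {μ L : ℝ} {n : ℕ} (hμ : 0 ≤ μ)
    (hstep : ∀ i < n, y (i + 1) = y i - μ • g i) (hg : ∀ i < n, ‖g i‖ ≤ L) :
    ∀ i ≤ n, ‖y i - y 0‖ ≤ i * (μ * L) := by
  intro i hi
  simpa using le_add_sum_of_forall_succ_le (a := fun i => ‖y i - y 0‖) (b := fun _ => μ * L)
    (n := i) fun j hj => calc
      ‖y (j + 1) - y 0‖ = ‖(y j - y 0) - μ • g j‖ := by rw [hstep j (by omega), sub_right_comm]
      _ ≤ ‖y j - y 0‖ + μ * L := by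
        grw [norm_sub_le, norm_smul, Real.norm_of_nonneg hμ, hg j (by omega)]

theorem sq_norm_sub_step_le {τ μ L : ℝ} {φ : E → ℝ} {x g : E} (hμ : 0 ≤ μ) (hg : ‖g‖ ≤ L)
    (hsub : IsWeakSubgradient τ φ x g) (z : E) :
    ‖z - (x - μ • g)‖ ^ 2 ≤
      ‖z - x‖ ^ 2 + 2 * μ * (φ z - φ x) + μ * τ * ‖z - x‖ ^ 2 + μ ^ 2 * L ^ 2 := by
  have hexp : ‖z - (x - μ • g)‖ ^ 2 = ‖z - x‖ ^ 2 + 2 * μ * ⟪g, z - x⟫ + μ ^ 2 * ‖g‖ ^ 2 := by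
    rw [sub_sub_eq_add_sub, add_sub_right_comm, norm_add_sq_real, real_inner_smul_right,
      norm_smul, Real.norm_of_nonneg hμ, real_inner_comm]
    ring
  have hinner : ⟪g, z - x⟫ ≤ φ z - φ x + τ / 2 * ‖z - x‖ ^ 2 := by linarith [hsub z]
  have hg2 : ‖g‖ ^ 2 ≤ L ^ 2 := pow_le_pow_left₀ (norm_nonneg g) hg 2
  rw [hexp]
  linarith [mul_le_mul_of_nonneg_left hinner hμ, mul_le_mul_of_nonneg_left hg2 (sq_nonneg μ)]

theorem sq_norm_sub_incremental_pass_le {f : ℕ → E → ℝ} {y g : ℕ → E} {m : ℕ} {τ μ L R : ℝ}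
    (hτ : 0 ≤ τ) (hμ : 0 ≤ μ) (hL : 0 ≤ L)
    (hlip : ∀ i < m, ∀ x y : E, |f i x - f i y| ≤ L * ‖x - y‖)
    (hstep : ∀ i < m, y (i + 1) = y i - μ • g i) (hg : ∀ i < m, ‖g i‖ ≤ L)
    (hsub : ∀ i < m, IsWeakSubgradient τ (f i) (y i) (g i))
    (hR : ∀ i < m, ‖y i - y 0‖ ≤ R) (z : E) :
    ‖z - y m‖ ^ 2 ≤ ‖z - y 0‖ ^ 2 + 2 * μ * ∑ i ∈ range m, (f i z - f i (y 0)) +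
      m * (2 * μ * (L * R) + 2 * μ * τ * (‖z - y 0‖ ^ 2 + R ^ 2) + μ ^ 2 * L ^ 2) := by
  have hpass := le_add_sum_of_forall_succ_le (a := fun i => ‖z - y i‖ ^ 2) (n := m)
    (b := fun i => 2 * μ * (f i z - f i (y 0)) +
      (2 * μ * (L * R) + 2 * μ * τ * (‖z - y 0‖ ^ 2 + R ^ 2) + μ ^ 2 * L ^ 2)) fun i hi => by
    have hdrift : f i (y 0) - f i (y i) ≤ L * R := by
      grw [le_abs_self (f i (y 0) - f i (y i)), hlip i hi, norm_sub_rev, hR i hi]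
    have hdist : ‖z - y i‖ ^ 2 ≤ 2 * (‖z - y 0‖ ^ 2 + R ^ 2) := by
      grw [norm_sub_le_norm_sub_add_norm_sub z (y 0) (y i), norm_sub_rev (y 0), hR i hi]
      exact add_sq_le
    have := sq_norm_sub_step_le hμ (hg i hi) (hsub i hi) z
    rw [hstep i hi]
    linarith [mul_le_mul_of_nonneg_left hdrift hμ,
      mul_le_mul_of_nonneg_left hdist (mul_nonneg hμ hτ)]
  simp only [sum_add_distrib, sum_const, card_range, nsmul_eq_mul, ← mul_sum] at hpass
  linarith

theorem moreauEnvelope_incremental_pass_le {f : ℕ → E → ℝ} {y g : ℕ → E} {P : E → E}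
    {F : E → ℝ} {m : ℕ} {τ τh μ L : ℝ} (hm : 1 ≤ m) (hτ : 0 ≤ τ) (hτh : 0 ≤ τh) (hμ : 0 ≤ μ)
    (hL : 0 ≤ L) (hlip : ∀ i < m, ∀ x y : E, |f i x - f i y| ≤ L * ‖x - y‖)
    (hP : ∀ x z : E,
      (1 / (m : ℝ)) * ∑ i ∈ range m, f i (P x) + τh / 2 * ‖P x - x‖ ^ 2 ≤
        (1 / (m : ℝ)) * ∑ i ∈ range m, f i z + τh / 2 * ‖z - x‖ ^ 2)
    (hF : ∀ x : E,
      F x = (1 / (m : ℝ)) * ∑ i ∈ range m, f i (P x) + τh / 2 * ‖P x - x‖ ^ 2)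
    (hstep : ∀ i < m, y (i + 1) = y i - μ • g i) (hg : ∀ i < m, ‖g i‖ ≤ L)
    (hsub : ∀ i < m, IsWeakSubgradient τ (f i) (y i) (g i)) :
    F (y m) ≤ F (y 0) - τh * (m * μ) * (τh / 2 - τ) * ‖y 0 - P (y 0)‖ ^ 2 +
      τh * (3 / 2 * (m * μ) ^ 2 * L ^ 2 + τ * (m * μ) ^ 3 * L ^ 2) := by
  have hR (i : ℕ) (hi : i < m) : ‖y i - y 0‖ ≤ m * μ * L := by
    grw [norm_sub_initial_le_of_steps hμ hstep hg i hi.le, (Nat.cast_le (α := ℝ)).mpr hi.le]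
    rw [mul_assoc]
  have hpass := sq_norm_sub_incremental_pass_le hτ hμ hL hlip hstep hg hsub hR (P (y 0))
  have hmean : μ * ∑ i ∈ range m, (f i (P (y 0)) - f i (y 0)) =
      m * μ * ((1 / (m : ℝ)) * ∑ i ∈ range m, f i (P (y 0)) -
        (1 / (m : ℝ)) * ∑ i ∈ range m, f i (y 0)) := by
    rw [sum_sub_distrib]
    field_simp
  have hprox := hP (y 0) (y 0)
  rw [sub_self, norm_zero] at hprox
  have hnext := (hF (y m)).trans_le (hP (y m) (P (y 0)))
  have hsq : (m : ℝ) * μ ^ 2 ≤ (m * μ) ^ 2 := by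
    nlinarith [(Nat.one_le_cast (α := ℝ)).mpr hm, sq_nonneg μ]
  rw [hF (y 0), norm_sub_rev (y 0)]
  nlinarith [mul_le_mul_of_nonneg_left hpass (by positivity : (0 : ℝ) ≤ τh / 2),
    mul_le_mul_of_nonneg_left hprox (by positivity : (0 : ℝ) ≤ τh * (m * μ)),
    mul_le_mul_of_nonneg_left hsq (by positivity : (0 : ℝ) ≤ τh * L ^ 2)]

end IncrementalPass

/-- The pass analysis gives the constants `3 / 2` and `1` where the stated bound has
`1 + τh / (τh - τ) ≥ 2` and its square. -/
theorem incremental_rate_bound_le {τ τh L Δ : ℝ} {N : ℕ} (hτ : 0 ≤ τ) (hτh : 2 * τ < τh) :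
    τh ^ 2 * (Δ / ((N + 1) * (τh * (1 / √(N + 1)) * (τh / 2 - τ))) +
      τh * (3 / 2 * (1 / √(N + 1)) ^ 2 * L ^ 2 + τ * (1 / √(N + 1)) ^ 3 * L ^ 2) /
        (τh * (1 / √(N + 1)) * (τh / 2 - τ))) ≤
      (τh * Δ + (1 + τh / (τh - τ)) * τh ^ 2 * L ^ 2) / ((τh / 2 - τ) * √(N + 1)) +
        (1 + τh / (τh - τ)) ^ 2 * τ * τh ^ 2 * L ^ 2 / ((τh / 2 - τ) * (N + 1)) := by
  have hA : 0 < τh / 2 - τ := by linarith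
  have hκ : 3 / 2 ≤ 1 + τh / (τh - τ) := by
    have : 1 ≤ τh / (τh - τ) := (one_le_div (by linarith)).mpr (by linarith)
    linarith
  have hκ2 : 1 ≤ (1 + τh / (τh - τ)) ^ 2 := by nlinarith
  -- naming `√(N + 1)` first keeps the rewrite `N + 1 = Q ^ 2` out of the square root
  set Q := √((N : ℝ) + 1)
  rw [← Real.sq_sqrt (by positivity : (0 : ℝ) ≤ N + 1)]
  calc _ = (τh * Δ + 3 / 2 * τh ^ 2 * L ^ 2) / ((τh / 2 - τ) * Q) +
        1 * τ * τh ^ 2 * L ^ 2 / ((τh / 2 - τ) * Q ^ 2) := by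
        field_simp
        ring
    _ ≤ _ := by gcongr

theorem incremental_subgradient_sublinear_rate_general
    {E : Type*} [NormedAddCommGroup E] [InnerProductSpace ℝ E]
    (m : ℕ) (hm : 1 ≤ m) (τ τh L : ℝ) (hτ : 0 ≤ τ) (hτh : 2 * τ < τh) (hL : 0 < L)
    (N : ℕ) (μ : ℝ) (hμ : μ = 1 / (m * Real.sqrt (N + 1)))
    (f : ℕ → E → ℝ)
    (hlip : ∀ i < m, ∀ x y : E, |f i x - f i y| ≤ L * ‖x - y‖)
    (P : E → E)
    (hP : ∀ x z : E,
      (1 / (m : ℝ)) * ∑ i ∈ Finset.range m, f i (P x) + τh / 2 * ‖P x - x‖ ^ 2 ≤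
        (1 / (m : ℝ)) * ∑ i ∈ Finset.range m, f i z + τh / 2 * ‖z - x‖ ^ 2)
    (F : E → ℝ)
    (hF : ∀ x : E,
      F x = (1 / (m : ℝ)) * ∑ i ∈ Finset.range m, f i (P x) + τh / 2 * ‖P x - x‖ ^ 2)
    (Finf : ℝ) (hFinf : ∀ x : E, Finf ≤ F x)
    (X : ℕ → E) (y g : ℕ → ℕ → E)
    (hy0 : ∀ k ≤ N, y k 0 = X k) (hXs : ∀ k ≤ N, X (k + 1) = y k m)
    (hupd : ∀ k ≤ N, ∀ i < m, y k (i + 1) = y k i - μ • g k i)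
    (hg : ∀ k ≤ N, ∀ i < m, ‖g k i‖ ≤ L)
    (hsub : ∀ k ≤ N, ∀ i < m, ∀ w : E,
      f i w ≥ f i (y k i) + ⟪g k i, w - y k i⟫ - τ / 2 * ‖w - y k i‖ ^ 2) :
    ∃ k ≤ N, τh ^ 2 * ‖X k - P (X k)‖ ^ 2 ≤
      (τh * (F (X 0) - Finf) + (1 + τh / (τh - τ)) * τh ^ 2 * L ^ 2) /
          ((τh / 2 - τ) * Real.sqrt (N + 1)) +
        (1 + τh / (τh - τ)) ^ 2 * τ * τh ^ 2 * L ^ 2 / ((τh / 2 - τ) * (N + 1)) := by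
  have hτh0 : 0 < τh := by linarith
  have hs : (m : ℝ) * μ = 1 / √(N + 1) := by
    rw [hμ]
    field_simp
  have hdescent (k : ℕ) (hk : k ≤ N) :
      F (X (k + 1)) ≤ F (X k) - τh * (1 / √(N + 1)) * (τh / 2 - τ) * ‖X k - P (X k)‖ ^ 2 +
        τh * (3 / 2 * (1 / √(N + 1)) ^ 2 * L ^ 2 + τ * (1 / √(N + 1)) ^ 3 * L ^ 2) := by
    have hpass := moreauEnvelope_incremental_pass_le hm hτ hτh0.le (by rw [hμ]; positivity)
      hL.le hlip hP hF (hupd k hk) (hg k hk) (hsub k hk)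
    rwa [hy0 k hk, ← hXs k hk, hs] at hpass
  have hc : 0 < τh * (1 / √(N + 1)) * (τh / 2 - τ) := mul_pos (by positivity) (by linarith)
  obtain ⟨k, hk, hle⟩ := exists_le_of_forall_succ_le_sub_add (a := fun k => F (X k)) hc hdescent
    (hFinf _)
  refine ⟨k, hk, ?_⟩
  grw [hle]
  exact incremental_rate_bound_le hτ hτh

/-- Theorem 3.1 for incremental (sub)-gradient descent with constant stepsize
μ = 1/(m·√(N+1)): sublinear rate for the gradient of the Moreau envelope. -/
theorem incremental_subgradient_sublinear_rate
    {E : Type*} [NormedAddCommGroup E] [InnerProductSpace ℝ E]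
    (m : ℕ) (hm : 1 ≤ m) (τ τh L : ℝ) (hτ : 0 ≤ τ) (hτh : 2 * τ < τh) (hL : 0 < L)
    (N : ℕ) (μ : ℝ) (hμ : μ = 1 / (m * Real.sqrt (N + 1)))
    (f : ℕ → E → ℝ)
    (hwc : ∀ i < m, ConvexOn ℝ Set.univ (fun x => f i x + τ / 2 * ‖x‖ ^ 2))
    (hlip : ∀ i < m, ∀ x y : E, |f i x - f i y| ≤ L * ‖x - y‖)
    (P : E → E)
    (hP : ∀ x z : E,
      (1 / (m : ℝ)) * ∑ i ∈ Finset.range m, f i (P x) + τh / 2 * ‖P x - x‖ ^ 2 ≤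
        (1 / (m : ℝ)) * ∑ i ∈ Finset.range m, f i z + τh / 2 * ‖z - x‖ ^ 2)
    (F : E → ℝ)
    (hF : ∀ x : E,
      F x = (1 / (m : ℝ)) * ∑ i ∈ Finset.range m, f i (P x) + τh / 2 * ‖P x - x‖ ^ 2)
    (Finf : ℝ) (hFinf : ∀ x : E, Finf ≤ F x)
    (X : ℕ → E) (y g : ℕ → ℕ → E)
    (hy0 : ∀ k ≤ N, y k 0 = X k) (hXs : ∀ k ≤ N, X (k + 1) = y k m)
    (hupd : ∀ k ≤ N, ∀ i < m, y k (i + 1) = y k i - μ • g k i)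
    (hg : ∀ k ≤ N, ∀ i < m, ‖g k i‖ ≤ L)
    (hsub : ∀ k ≤ N, ∀ i < m, ∀ w : E,
      f i w ≥ f i (y k i) + ⟪g k i, w - y k i⟫ - τ / 2 * ‖w - y k i‖ ^ 2) :
    ∃ k ≤ N, τh ^ 2 * ‖X k - P (X k)‖ ^ 2 ≤
      (τh * (F (X 0) - Finf) + (1 + τh / (τh - τ)) * τh ^ 2 * L ^ 2) /
          ((τh / 2 - τ) * Real.sqrt (N + 1)) +
        (1 + τh / (τh - τ)) ^ 2 * τ * τh ^ 2 * L ^ 2 / ((τh / 2 - τ) * (N + 1)) :=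
  incremental_subgradient_sublinear_rate_general m hm τ τh L hτ hτh hL N μ hμ f hlip P hP F hF Finf
    hFinf X y g hy0 hXs hupd hg hsub
end

section
/- Let E be a real inner product space, m ≥ 1 a natural number, τ ≥ 0, τ̂ > τ, L > 0, and μ > 0. Let f₁, …, f_m : E → ℝ each be τ-weakly convex and Lipschitz with constant L, and let f = (1/m)∑ᵢ fᵢ. Let P : E → E be such that for every x ∈ E, P x is a global minimizer of y ↦ f(y) + (τ̂/2)‖y − x‖², and define F(x) = f(P x) + (τ̂/2)‖P x − x‖². Let x₀, x₁, …, x_m ∈ E satisfy xᵢ = xᵢ₋₁ − μ·gᵢ for i = 1, …, m, where each gᵢ ∈ E satisfies ‖gᵢ‖ ≤ L and fᵢ(w) ≥ fᵢ(xᵢ₋₁) + ⟨gᵢ, w − xᵢ₋₁⟩ − (τ/2)‖w − xᵢ₋₁‖² for all w ∈ E. Then (τ̂/2 − τ)·τ̂·m·μ·‖x₀ − P x₀‖² ≤ F(x₀) − F(x_m) + (1 + τ̂/(τ̂ − τ))·τ̂·m²μ²L² + (1 + τ̂/(τ̂ − τ))²·τ·τ̂·m³μ³L². -/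
open scoped RealInnerProductSpace

set_option maxHeartbeats 1000000 in
/-- Key per-cycle recursion (eq. (3.13)) for the Moreau envelope along one cycle of
incremental (sub)-gradient descent. -/
theorem moreau_envelope_cycle_recursion
    {E : Type*} [NormedAddCommGroup E] [InnerProductSpace ℝ E]
    (m : ℕ) (hm : 1 ≤ m) (τ τh L μ : ℝ) (hτ : 0 ≤ τ) (hτh : τ < τh) (hL : 0 < L)
    (hμ : 0 < μ)
    (f : ℕ → E → ℝ)
    (hwc : ∀ i < m, ConvexOn ℝ Set.univ (fun x => f i x + τ / 2 * ‖x‖ ^ 2))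
    (hlip : ∀ i < m, ∀ x y : E, |f i x - f i y| ≤ L * ‖x - y‖)
    (P : E → E)
    (hP : ∀ x z : E,
      (1 / (m : ℝ)) * ∑ i ∈ Finset.range m, f i (P x) + τh / 2 * ‖P x - x‖ ^ 2 ≤
        (1 / (m : ℝ)) * ∑ i ∈ Finset.range m, f i z + τh / 2 * ‖z - x‖ ^ 2)
    (F : E → ℝ)
    (hF : ∀ x : E,
      F x = (1 / (m : ℝ)) * ∑ i ∈ Finset.range m, f i (P x) + τh / 2 * ‖P x - x‖ ^ 2)
    (x g : ℕ → E)
    (hupd : ∀ i < m, x (i + 1) = x i - μ • g i)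
    (hg : ∀ i < m, ‖g i‖ ≤ L)
    (hsub : ∀ i < m, ∀ w : E,
      f i w ≥ f i (x i) + ⟪g i, w - x i⟫ - τ / 2 * ‖w - x i‖ ^ 2) :
    (τh / 2 - τ) * τh * m * μ * ‖x 0 - P (x 0)‖ ^ 2 ≤
      F (x 0) - F (x m) + (1 + τh / (τh - τ)) * τh * m ^ 2 * μ ^ 2 * L ^ 2
        + (1 + τh / (τh - τ)) ^ 2 * τ * τh * m ^ 3 * μ ^ 3 * L ^ 2 := by
  have hτh0 : 0 < τh := lt_of_le_of_lt hτ hτh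
  have hmR : (1:ℝ) ≤ (m:ℝ) := by exact_mod_cast hm
  have hm0 : (0:ℝ) < (m:ℝ) := by linarith
  set xh := P (x 0) with hxh
  -- per-step inequality
  have hstep : ∀ i < m, ‖x (i+1) - xh‖^2 ≤ ‖x i - xh‖^2
      - 2*μ*(f i (x i) - f i xh) + μ*τ*‖x i - xh‖^2 + μ^2*L^2 := by
    intro i hi
    have hx' : x (i+1) - xh = (x i - xh) - μ • g i := by rw [hupd i hi]; abel
    have hsm : ‖μ • g i‖^2 = μ^2 * ‖g i‖^2 := by
      rw [norm_smul, mul_pow, Real.norm_eq_abs, sq_abs]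
    have hinner : ⟪x i - xh, μ • g i⟫ = μ * ⟪g i, x i - xh⟫ := by
      rw [real_inner_smul_right, real_inner_comm]
    have hexp : ‖x (i+1) - xh‖^2
        = ‖x i - xh‖^2 - 2*(μ*⟪g i, x i - xh⟫) + μ^2*‖g i‖^2 := by
      rw [hx', norm_sub_sq_real, hinner, hsm]
    have hsg := hsub i hi xh
    have h1 : ⟪g i, xh - x i⟫ = -⟪g i, x i - xh⟫ := by
      rw [show xh - x i = -(x i - xh) from by abel, inner_neg_right]
    have h2 : ‖xh - x i‖ = ‖x i - xh‖ := norm_sub_rev _ _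
    rw [h1, h2] at hsg
    have hginner : f i (x i) - f i xh - τ/2*‖x i - xh‖^2 ≤ ⟪g i, x i - xh⟫ := by linarith
    have hgn : ‖g i‖^2 ≤ L^2 := by nlinarith [hg i hi, norm_nonneg (g i)]
    have hmul := mul_le_mul_of_nonneg_left hginner (le_of_lt hμ)
    have hmul2 : μ^2*‖g i‖^2 ≤ μ^2*L^2 := by
      apply mul_le_mul_of_nonneg_left hgn; positivity
    rw [hexp]; nlinarith [hmul, hmul2]
  -- distance to start
  have hdist : ∀ i, i ≤ m → ‖x i - x 0‖ ≤ (i:ℝ)*(μ*L) := by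
    intro i
    induction i with
    | zero => intro _; simp
    | succ i ih =>
      intro hi
      have hi' : i < m := hi
      have hx' : x (i+1) - x 0 = (x i - x 0) - μ • g i := by rw [hupd i hi']; abel
      have hgs : ‖μ • g i‖ ≤ μ*L := by
        rw [norm_smul, Real.norm_eq_abs, abs_of_pos hμ]
        exact mul_le_mul_of_nonneg_left (hg i hi') (le_of_lt hμ)
      have h1 : ‖x (i+1) - x 0‖ ≤ ‖x i - x 0‖ + ‖μ • g i‖ := by
        rw [hx']; exact norm_sub_le _ _
      have h2 := ih (le_of_lt hi')
      push_cast
      linarith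
  -- telescoped inequality
  have hA : ∀ k, k ≤ m → ‖x k - xh‖^2
      + 2*μ*(∑ i ∈ Finset.range k, (f i (x i) - f i xh))
      ≤ ‖x 0 - xh‖^2 + μ*τ*(∑ i ∈ Finset.range k, ‖x i - xh‖^2) + (k:ℝ)*(μ^2*L^2) := by
    intro k
    induction k with
    | zero => intro _; simp
    | succ k ih =>
      intro hk
      have hk' : k < m := hk
      have h1 := ih (le_of_lt hk')
      have h2 := hstep k hk'
      rw [Finset.sum_range_succ, Finset.sum_range_succ]
      push_cast
      linarith
  -- pointwise distance bound per iterate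
  have hxb : ∀ i < m, ‖x i - xh‖^2 ≤ 2*‖x 0 - xh‖^2 + 2*((m:ℝ)*(μ*L))^2 := by
    intro i hi
    have heq : x i - xh = (x i - x 0) + (x 0 - xh) := by abel
    have h1 : ‖x i - xh‖ ≤ ‖x i - x 0‖ + ‖x 0 - xh‖ := by
      rw [heq]; exact norm_add_le _ _
    have hiR : (i:ℝ) ≤ (m:ℝ) := by exact_mod_cast le_of_lt hi
    have h2 : ‖x i - x 0‖ ≤ (m:ℝ)*(μ*L) := by
      refine le_trans (hdist i (le_of_lt hi)) ?_
      have : 0 ≤ μ*L := by positivity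
      nlinarith
    nlinarith [norm_nonneg (x i - xh), norm_nonneg (x i - x 0), norm_nonneg (x 0 - xh),
      sq_nonneg (‖x i - x 0‖ - ‖x 0 - xh‖)]
  -- sum of squared distances
  have hSn : ∑ i ∈ Finset.range m, ‖x i - xh‖^2
      ≤ (m:ℝ)*(2*‖x 0 - xh‖^2 + 2*((m:ℝ)*(μ*L))^2) := by
    calc ∑ i ∈ Finset.range m, ‖x i - xh‖^2
        ≤ ∑ _i ∈ Finset.range m, (2*‖x 0 - xh‖^2 + 2*((m:ℝ)*(μ*L))^2) :=
          Finset.sum_le_sum fun i hi => hxb i (Finset.mem_range.mp hi)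
      _ = (m:ℝ)*(2*‖x 0 - xh‖^2 + 2*((m:ℝ)*(μ*L))^2) := by
          rw [Finset.sum_const, Finset.card_range, nsmul_eq_mul]
  -- lower bound on sum of function gaps
  have hSf : (∑ i ∈ Finset.range m, f i (x 0)) - (∑ i ∈ Finset.range m, f i xh)
      - (m:ℝ)*((m:ℝ)*(μ*L^2))
      ≤ ∑ i ∈ Finset.range m, (f i (x i) - f i xh) := by
    have h : ∀ i ∈ Finset.range m,
        f i (x 0) - f i xh - (m:ℝ)*(μ*L^2) ≤ f i (x i) - f i xh := by
      intro i hi'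
      have hi := Finset.mem_range.mp hi'
      have hl := abs_le.mp (hlip i hi (x i) (x 0))
      have hiR : (i:ℝ) ≤ (m:ℝ) := by exact_mod_cast le_of_lt hi
      have hd : ‖x i - x 0‖ ≤ (m:ℝ)*(μ*L) := by
        refine le_trans (hdist i (le_of_lt hi)) ?_
        have : 0 ≤ μ*L := by positivity
        nlinarith
      have h3 : L*‖x i - x 0‖ ≤ L*((m:ℝ)*(μ*L)) :=
        mul_le_mul_of_nonneg_left hd (le_of_lt hL)
      nlinarith
    have hs := Finset.sum_le_sum h
    have heq : ∑ i ∈ Finset.range m, (f i (x 0) - f i xh - (m:ℝ)*(μ*L^2))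
        = (∑ i ∈ Finset.range m, f i (x 0)) - (∑ i ∈ Finset.range m, f i xh)
          - (m:ℝ)*((m:ℝ)*(μ*L^2)) := by
      rw [Finset.sum_sub_distrib, Finset.sum_sub_distrib, Finset.sum_const,
        Finset.card_range, nsmul_eq_mul]
    linarith [hs, heq.ge, heq.le]
  -- average multiplied by m
  have hmul_avg : ∀ z : E,
      (m:ℝ) * ((1/(m:ℝ)) * ∑ i ∈ Finset.range m, f i z) = ∑ i ∈ Finset.range m, f i z := by
    intro z
    field_simp
  -- prox optimality at x 0 with z = x 0
  have hPx0 := hP (x 0) (x 0)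
  rw [← hxh] at hPx0
  simp only [sub_self, norm_zero, ne_eq, OfNat.ofNat_ne_zero, not_false_eq_true,
    zero_pow, mul_zero, add_zero] at hPx0
  have hS0Sh : (m:ℝ)*(τh/2*‖x 0 - xh‖^2)
      ≤ (∑ i ∈ Finset.range m, f i (x 0)) - ∑ i ∈ Finset.range m, f i xh := by
    have h := mul_le_mul_of_nonneg_left hPx0 (le_of_lt hm0)
    rw [mul_add, hmul_avg, hmul_avg] at h
    have hnr : ‖xh - x 0‖ = ‖x 0 - xh‖ := norm_sub_rev _ _
    rw [hnr] at h
    nlinarith [h]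
  -- F values
  have hF0 : F (x 0) = (1/(m:ℝ)) * (∑ i ∈ Finset.range m, f i xh)
      + τh/2*‖x 0 - xh‖^2 := by
    have := hF (x 0)
    rw [← hxh, norm_sub_rev] at this
    exact this
  have hFm : F (x m) ≤ (1/(m:ℝ)) * (∑ i ∈ Finset.range m, f i xh)
      + τh/2*‖x m - xh‖^2 := by
    have h1 := hP (x m) xh
    have h2 := hF (x m)
    rw [norm_sub_rev xh (x m)] at h1
    linarith [h2.le, h1]
  -- combine
  have hAm := hA m le_rfl
  have P1 := mul_le_mul_of_nonneg_left hSf (le_of_lt hμ)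
  have P2 := mul_le_mul_of_nonneg_left hS0Sh (le_of_lt hμ)
  have P3 := mul_le_mul_of_nonneg_left hSn (by positivity : (0:ℝ) ≤ μ*τ)
  have hmm2 : (m:ℝ) ≤ (m:ℝ)^2 := by nlinarith
  have P4 := mul_le_mul_of_nonneg_right hmm2 (by positivity : (0:ℝ) ≤ μ^2*L^2)
  have R1 : τh*(m:ℝ)*μ*‖x 0 - xh‖^2 - 2*τ*(m:ℝ)*μ*‖x 0 - xh‖^2
      - 3*(m:ℝ)^2*μ^2*L^2 - 2*τ*(m:ℝ)^3*μ^3*L^2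
      ≤ ‖x 0 - xh‖^2 - ‖x m - xh‖^2 := by
    linarith [hAm, P1, P2, P3, P4]
  have P5 := mul_le_mul_of_nonneg_left R1 (by positivity : (0:ℝ) ≤ τh/2)
  have hFF : τh/2*‖x 0 - xh‖^2 - τh/2*‖x m - xh‖^2 ≤ F (x 0) - F (x m) := by
    linarith [hF0.le, hF0.ge, hFm]
  have hden : 0 < τh - τ := by linarith
  have hc : 2 ≤ 1 + τh/(τh - τ) := by
    have h1 : (1:ℝ) ≤ τh/(τh - τ) := (one_le_div hden).mpr (by linarith)
    linarith
  have hc2 : (1:ℝ) ≤ (1 + τh/(τh - τ))^2 := by nlinarith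
  have hq1 : (3/2)*(τh*(m:ℝ)^2*μ^2*L^2) ≤ (1 + τh/(τh - τ))*(τh*(m:ℝ)^2*μ^2*L^2) := by
    apply mul_le_mul_of_nonneg_right (by linarith) (by positivity)
  have hq2 : 1*(τ*τh*(m:ℝ)^3*μ^3*L^2) ≤ (1 + τh/(τh - τ))^2*(τ*τh*(m:ℝ)^3*μ^3*L^2) := by
    apply mul_le_mul_of_nonneg_right hc2 (by positivity)
  nlinarith [P5, hFF, hq1, hq2]
end

section
/- Let E be a real inner product space, m ≥ 1 a natural number, τ̂ > 0, L > 0, μ > 0, and f : E → ℝ. Let P : E → E be such that for every x ∈ E, P x is a global minimizer of y ↦ f(y) + (τ̂/2)‖y − x‖², and define F(x) = f(P x) + (τ̂/2)‖P x − x‖². Let x₀, x₁, …, x_m ∈ E satisfy xᵢ = xᵢ₋₁ − μ·gᵢ for i = 1, …, m, where each gᵢ ∈ E has ‖gᵢ‖ ≤ L. Then F(x_m) ≤ F(x₀) − τ̂·μ·∑_{i=1}^{m} ⟨gᵢ, xᵢ₋₁ − P(xᵢ₋₁)⟩ + (τ̂/2)·m·μ²·L². -/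
open scoped RealInnerProductSpace

/-- Descent estimate for the Moreau envelope along one cycle of incremental updates
(eq. (3.6)); requires only the minimality of the proximal selection P and the norm
bound on the step vectors. -/
theorem moreau_envelope_cycle_descent
    {E : Type*} [NormedAddCommGroup E] [InnerProductSpace ℝ E]
    (m : ℕ) (hm : 1 ≤ m) (τh L μ : ℝ) (hτh : 0 < τh) (hL : 0 < L) (hμ : 0 < μ)
    (f : E → ℝ) (P : E → E)
    (hP : ∀ x z : E, f (P x) + τh / 2 * ‖P x - x‖ ^ 2 ≤ f z + τh / 2 * ‖z - x‖ ^ 2)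
    (F : E → ℝ)
    (hF : ∀ x : E, F x = f (P x) + τh / 2 * ‖P x - x‖ ^ 2)
    (x g : ℕ → E)
    (hupd : ∀ i < m, x (i + 1) = x i - μ • g i)
    (hg : ∀ i < m, ‖g i‖ ≤ L) :
    F (x m) ≤ F (x 0)
      - τh * μ * ∑ i ∈ Finset.range m, ⟪g i, x i - P (x i)⟫
      + τh / 2 * m * μ ^ 2 * L ^ 2 := by
  have step : ∀ i, i < m →
      F (x (i + 1)) ≤ F (x i) - τh * μ * ⟪g i, x i - P (x i)⟫ + τh / 2 * μ ^ 2 * L ^ 2 := by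
    intro i hi
    have h1 : F (x (i + 1)) ≤ f (P (x i)) + τh / 2 * ‖P (x i) - x (i + 1)‖ ^ 2 := by
      rw [hF]; exact hP (x (i + 1)) (P (x i))
    have hsq : ‖P (x i) - x (i + 1)‖ ^ 2
        = ‖P (x i) - x i‖ ^ 2 - 2 * μ * ⟪g i, x i - P (x i)⟫ + μ ^ 2 * ‖g i‖ ^ 2 := by
      have : P (x i) - x (i + 1) = (P (x i) - x i) + μ • g i := by
        rw [hupd i hi]; abel
      rw [this, norm_add_sq_real, real_inner_smul_right, norm_smul,
        mul_pow, real_inner_comm]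
      have : ⟪g i, P (x i) - x i⟫ = - ⟪g i, x i - P (x i)⟫ := by
        rw [← inner_neg_right]; congr 1; abel
      rw [this]
      simp [abs_of_pos hμ]
      ring
    have hgL : ‖g i‖ ^ 2 ≤ L ^ 2 := by
      have := hg i hi
      nlinarith [norm_nonneg (g i)]
    rw [hF (x i)]
    calc F (x (i + 1)) ≤ f (P (x i)) + τh / 2 * ‖P (x i) - x (i + 1)‖ ^ 2 := h1
      _ ≤ _ := by rw [hsq]; nlinarith [mul_le_mul_of_nonneg_left hgL (by positivity : (0:ℝ) ≤ τh / 2 * μ ^ 2)]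
  have H : ∀ k, k ≤ m → F (x k) ≤ F (x 0)
      - τh * μ * ∑ i ∈ Finset.range k, ⟪g i, x i - P (x i)⟫
      + τh / 2 * k * μ ^ 2 * L ^ 2 := by
    intro k hk
    induction k with
    | zero => simp
    | succ n ih =>
      have hn : n < m := hk
      have h1 := ih (le_of_lt hn)
      have h2 := step n hn
      rw [Finset.sum_range_succ]
      push_cast
      linarith
  exact H m le_rfl
end

section
/- Let E be a real inner product space, a ∈ E, and b ∈ ℝ. Then the function x ↦ |⟨a, x⟩² − b| + ‖a‖²·‖x‖² is convex on E. Equivalently, the robust phase retrieval component function x ↦ |⟨a, x⟩² − b| is τ-weakly convex with parameter τ = 2‖a‖². -/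
/-!
Since `|u| + h = max (h + u) (h - u)`, it suffices that `‖a‖² ‖x‖² ± ⟪a, x⟫²` are convex. Both
are quadratic forms, nonnegative by Cauchy–Schwarz, and a nonnegative quadratic form `q` is convex
because `s q x + t q y - q (s x + t y) = s t q (x - y)` whenever `s + t = 1`.
-/

open scoped RealInnerProductSpace
open Set

theorem LinearMap.BilinForm.IsNonneg.convexOn {𝕜 E : Type*} [Field 𝕜] [LinearOrder 𝕜]
    [IsStrictOrderedRing 𝕜] [AddCommGroup E] [Module 𝕜 E] {B : LinearMap.BilinForm 𝕜 E}
    (hB : B.IsNonneg) : ConvexOn 𝕜 univ fun x => B x x := by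
  refine ⟨convex_univ, fun x _ y _ s t hs ht hst => ?_⟩
  obtain rfl : t = 1 - s := by linear_combination hst
  have gap : s * B x x + (1 - s) * B y y - B (s • x + (1 - s) • y) (s • x + (1 - s) • y)
      = s * (1 - s) * B (x - y) (x - y) := by
    simp only [map_add, map_sub, map_smul, LinearMap.add_apply, LinearMap.sub_apply,
      LinearMap.smul_apply, smul_eq_mul]
    ring
  have := mul_nonneg (mul_nonneg hs ht) (hB.nonneg (x - y))
  simp only [smul_eq_mul]
  linarith

theorem convexOn_norm_sq_mul_norm_sq_add_mul_inner_sq {E : Type*} [NormedAddCommGroup E]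
    [InnerProductSpace ℝ E] (a : E) {c : ℝ} (hc : |c| ≤ 1) :
    ConvexOn ℝ univ fun x : E => ‖a‖ ^ 2 * ‖x‖ ^ 2 + c * ⟪a, x⟫ ^ 2 := by
  let B : LinearMap.BilinForm ℝ E :=
    ‖a‖ ^ 2 • innerₗ E + c • (innerₗ E a).smulRight (innerₗ E a)
  have hB : ∀ x, B x x = ‖a‖ ^ 2 * ‖x‖ ^ 2 + c * ⟪a, x⟫ ^ 2 := fun x => by
    simp only [B, LinearMap.add_apply, LinearMap.smul_apply, LinearMap.smulRight_apply,
      innerₗ_apply_apply, real_inner_self_eq_norm_sq, smul_eq_mul]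
    ring
  simp only [← hB]
  refine LinearMap.BilinForm.IsNonneg.convexOn ⟨fun x => ?_⟩
  have cauchySchwarz : ⟪a, x⟫ ^ 2 ≤ ‖a‖ ^ 2 * ‖x‖ ^ 2 := by
    rw [← mul_pow, ← sq_abs]
    exact pow_le_pow_left₀ (abs_nonneg _) (abs_real_inner_le_norm a x) 2
  rw [hB]
  nlinarith [neg_abs_le c, sq_nonneg ⟪a, x⟫]

theorem ConvexOn.abs_add {E : Type*} [AddCommGroup E] [Module ℝ E] {s : Set E} {f g : E → ℝ}
    (hadd : ConvexOn ℝ s (g + f)) (hsub : ConvexOn ℝ s (g - f)) :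
    ConvexOn ℝ s fun x => |f x| + g x := by
  have hmax : (fun x => |f x| + g x) = (g + f) ⊔ (g - f) := by
    funext x
    rw [Pi.sup_apply, Pi.add_apply, Pi.sub_apply, abs_eq_max_neg, ← max_add_add_right]
    congr 1 <;> ring
  exact hmax ▸ hadd.sup hsub

/-- The robust phase retrieval component x ↦ |⟨a,x⟩² − b| is weakly convex with
parameter 2‖a‖². -/
theorem robust_phase_retrieval_weaklyConvex
    {E : Type*} [NormedAddCommGroup E] [InnerProductSpace ℝ E]
    (a : E) (b : ℝ) :
    ConvexOn ℝ Set.univ (fun x : E => |⟪a, x⟫ ^ 2 - b| + ‖a‖ ^ 2 * ‖x‖ ^ 2) := by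
  refine ConvexOn.abs_add ?_ ?_
  · have := (convexOn_norm_sq_mul_norm_sq_add_mul_inner_sq a (c := 1) (by simp)).add_const (-b)
    refine this.congr fun x _ => ?_
    simp only [Pi.add_apply]
    ring
  · have := (convexOn_norm_sq_mul_norm_sq_add_mul_inner_sq a (c := -1) (by simp)).add_const b
    refine this.congr fun x _ => ?_
    simp only [Pi.add_apply, Pi.sub_apply]
    ring
end

section
/- Let E and F be real inner product spaces, a ∈ E, c ∈ F, and y ∈ ℝ. Then the function (w, x) ↦ |⟨a, w⟩·⟨c, x⟩ − y| + (‖a‖·‖c‖/2)·(‖w‖² + ‖x‖²) is convex on E × F. Equivalently, the robust blind deconvolution component function (w, x) ↦ |⟨a, w⟩·⟨c, x⟩ − y| is τ-weakly convex with parameter τ = ‖a‖·‖c‖ (with respect to the product inner product on E × F). -/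
/-!
Since `|r| = max r (-r)`, it suffices that for `ε = ±1` each
`(w, x) ↦ ε ⟪a, w⟫ ⟪c, x⟫ + ‖a‖ ‖c‖ / 2 (‖w‖² + ‖x‖²)` is convex. This is a quadratic form,
nonnegative by Cauchy–Schwarz and AM–GM, and a nonnegative quadratic form is convex because
`Q (t p + u q) = t Q p + u Q q - t u Q (p - q)` whenever `t + u = 1`.
-/

open scoped RealInnerProductSpace

namespace QuadraticMap

variable {R M : Type*} [CommRing R] [AddCommGroup M] [Module R M]

theorem apply_smul_add_smul (Q : QuadraticMap R M R) {t u : R} (htu : t + u = 1) (p q : M) :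
    Q (t • p + u • q) = t * Q p + u * Q q - t * u * Q (p - q) := by
  have hsum : Q (t • p + u • q) = t * t * Q p + u * u * Q q + t * u * polar Q p q := by
    have hpol : polar Q (t • p) (u • q) = t * u * polar Q p q := by
      simp only [polar_smul_left, polar_smul_right, smul_eq_mul]; ring
    rw [← hpol, polar, Q.map_smul, Q.map_smul, smul_eq_mul, smul_eq_mul]; ring
  have hdiff : Q (p - q) = Q p + Q q - polar Q p q := by
    have hneg := polar_neg_right Q p q
    rw [polar, Q.map_neg, ← sub_eq_add_neg] at hneg
    linear_combination hneg
  rw [hsum, hdiff]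
  linear_combination (t * Q p + u * Q q) * htu

theorem convexOn_univ_of_nonneg [PartialOrder R] [IsOrderedRing R] (Q : QuadraticMap R M R)
    (hQ : ∀ v, 0 ≤ Q v) : ConvexOn R Set.univ Q := by
  refine ⟨convex_univ, fun p _ q _ t u ht hu htu => ?_⟩
  rw [smul_eq_mul, smul_eq_mul, Q.apply_smul_add_smul htu]
  exact sub_le_self _ (mul_nonneg (mul_nonneg ht hu) (hQ _))

end QuadraticMap

theorem convexOn_abs_add {V : Type*} [AddCommGroup V] [Module ℝ V] {s : Set V} {f g : V → ℝ}
    (h : ∀ ε : ℝ, |ε| ≤ 1 → ConvexOn ℝ s (fun x => ε * f x + g x)) :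
    ConvexOn ℝ s (fun x => |f x| + g x) := by
  have hpos : ConvexOn ℝ s (fun x => f x + g x) := by simpa using h 1 (by norm_num)
  have hneg : ConvexOn ℝ s (fun x => -f x + g x) := by simpa using h (-1) (by norm_num)
  refine (hpos.sup hneg).congr fun x _ => ?_
  simp only [Pi.sup_apply, max_add_add_right, abs_eq_max_neg]

section InnerProduct

variable {E F : Type*} [NormedAddCommGroup E] [InnerProductSpace ℝ E]
  [NormedAddCommGroup F] [InnerProductSpace ℝ F]

theorem abs_inner_mul_inner_le (a w : E) (c x : F) :
    |⟪a, w⟫ * ⟪c, x⟫| ≤ ‖a‖ * ‖c‖ / 2 * (‖w‖ ^ 2 + ‖x‖ ^ 2) :=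
  calc |⟪a, w⟫ * ⟪c, x⟫| = |⟪a, w⟫| * |⟪c, x⟫| := abs_mul _ _
    _ ≤ (‖a‖ * ‖w‖) * (‖c‖ * ‖x‖) :=
      mul_le_mul (abs_real_inner_le_norm a w) (abs_real_inner_le_norm c x) (abs_nonneg _)
        (by positivity)
    _ = ‖a‖ * ‖c‖ / 2 * (2 * ‖w‖ * ‖x‖) := by ring
    _ ≤ ‖a‖ * ‖c‖ / 2 * (‖w‖ ^ 2 + ‖x‖ ^ 2) := by gcongr; exact two_mul_le_add_sq _ _

theorem convexOn_inner_mul_inner_add_norm_sq (a : E) (c : F) {ε : ℝ} (hε : |ε| ≤ 1) :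
    ConvexOn ℝ Set.univ (fun p : E × F =>
      ε * (⟪a, p.1⟫ * ⟪c, p.2⟫) + ‖a‖ * ‖c‖ / 2 * (‖p.1‖ ^ 2 + ‖p.2‖ ^ 2)) := by
  let Q : QuadraticMap ℝ (E × F) ℝ :=
    ε • QuadraticMap.linMulLin ((innerₗ E a).comp (LinearMap.fst ℝ E F))
        ((innerₗ F c).comp (LinearMap.snd ℝ E F)) +
      (‖a‖ * ‖c‖ / 2) • (LinearMap.BilinMap.toQuadraticMap (innerₗ E)).prod
        (LinearMap.BilinMap.toQuadraticMap (innerₗ F))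
  have hQ : ⇑Q = fun p : E × F =>
      ε * (⟪a, p.1⟫ * ⟪c, p.2⟫) + ‖a‖ * ‖c‖ / 2 * (‖p.1‖ ^ 2 + ‖p.2‖ ^ 2) := by
    ext p
    simp [Q]
  rw [← hQ]
  refine Q.convexOn_univ_of_nonneg fun p => ?_
  have hB := abs_inner_mul_inner_le a p.1 c p.2
  have hεB : |ε * (⟪a, p.1⟫ * ⟪c, p.2⟫)| ≤ |⟪a, p.1⟫ * ⟪c, p.2⟫| := by
    rw [abs_mul]
    exact mul_le_of_le_one_left (abs_nonneg _) hε
  rw [hQ]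
  linarith [neg_abs_le (ε * (⟪a, p.1⟫ * ⟪c, p.2⟫))]

end InnerProduct

/-- The robust blind deconvolution component (w,x) ↦ |⟨a,w⟩⟨c,x⟩ − y| is weakly convex
with parameter ‖a‖·‖c‖ on the product space E × F. -/
theorem robust_blind_deconvolution_weaklyConvex
    {E : Type*} [NormedAddCommGroup E] [InnerProductSpace ℝ E]
    {F : Type*} [NormedAddCommGroup F] [InnerProductSpace ℝ F]
    (a : E) (c : F) (y : ℝ) :
    ConvexOn ℝ Set.univ (fun p : E × F =>
      |⟪a, p.1⟫ * ⟪c, p.2⟫ - y| + ‖a‖ * ‖c‖ / 2 * (‖p.1‖ ^ 2 + ‖p.2‖ ^ 2)) := by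
  refine convexOn_abs_add fun ε hε => ?_
  refine ((convexOn_inner_mul_inner_add_norm_sq a c hε).add_const (-(ε * y))).congr fun p _ => ?_
  simp only [Pi.add_apply]
  ring
end

section
/- Let n, r be natural numbers, A : Matrix (Fin n) (Fin n) ℝ, and y ∈ ℝ. Then the function U : Matrix (Fin n) (Fin r) ℝ ↦ |y − trace(Aᵀ * (U * Uᵀ))| + ‖A‖₂ · ‖U‖_F² is convex, where ‖A‖₂ denotes the L2 operator (spectral) norm of A and ‖U‖_F the Frobenius norm of U. Equivalently, the robust matrix sensing component function U ↦ |y − ⟨A, U Uᵀ⟩| is τ-weakly convex with parameter τ = 2‖A‖₂ with respect to the Frobenius inner product. -/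
/-!
Write `q U = ⟨A, U Uᵀ⟩` and `N U = ‖U‖_F²`, and let `c = ‖A‖₂`. Column by column,
`|uᵀ A u| ≤ c ‖u‖²`, so the quadratic forms `c N ± q = ⟨c I ± A, U Uᵀ⟩` are nonnegative and
therefore convex. The objective is the maximum of `(c N - q) + y` and `(c N + q) - y`.
-/

open Matrix

namespace QuadraticMap

variable {E : Type*} [AddCommGroup E] [Module ℝ E]

theorem convexOn_univ_of_nonneg_s18 (Q : QuadraticForm ℝ E) (hQ : ∀ x, 0 ≤ Q x) :
    ConvexOn ℝ Set.univ Q := by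
  refine ⟨convex_univ, fun x _ y _ a b ha hb hab => ?_⟩
  obtain rfl : b = 1 - a := by linarith
  -- `a Q x + (1 - a) Q y - Q (a x + (1 - a) y) = a (1 - a) Q (x - y)`
  have hcomb : a • x + (1 - a) • y = y + a • (x - y) := by
    rw [sub_smul, one_smul, smul_sub]; abel
  have hx := QuadraticMap.map_add Q y (x - y)
  rw [add_sub_cancel] at hx
  rw [hcomb, QuadraticMap.map_add Q, polar_smul_right, QuadraticMap.map_smul, hx]
  simp only [smul_eq_mul]
  nlinarith [mul_nonneg (mul_nonneg ha hb) (hQ (x - y))]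

end QuadraticMap

namespace Matrix

variable {m r : Type*} [Fintype m] [Fintype r]

theorem abs_dotProduct_mulVec_self_le [DecidableEq m] (A : Matrix m m ℝ) (v : m → ℝ) :
    |v ⬝ᵥ A *ᵥ v| ≤ ‖toEuclideanCLM (𝕜 := ℝ) A‖ * (v ⬝ᵥ v) := by
  set x : EuclideanSpace ℝ m := WithLp.toLp 2 v
  have hnorm : ‖x‖ ^ 2 = v ⬝ᵥ v := by
    rw [← real_inner_self_eq_norm_sq]; exact EuclideanSpace.inner_toLp_toLp v v
  calc |v ⬝ᵥ A *ᵥ v| = |inner ℝ x (toEuclideanCLM (𝕜 := ℝ) A x)| := by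
        rw [inner_toEuclideanCLM]
    _ ≤ ‖x‖ * ‖toEuclideanCLM (𝕜 := ℝ) A x‖ := abs_real_inner_le_norm _ _
    _ ≤ ‖x‖ * (‖toEuclideanCLM (𝕜 := ℝ) A‖ * ‖x‖) := by
        gcongr; exact ContinuousLinearMap.le_opNorm _ _
    _ = ‖toEuclideanCLM (𝕜 := ℝ) A‖ * (v ⬝ᵥ v) := by rw [← hnorm]; ring

theorem dotProduct_mulVec_opNorm_smul_one_add_nonneg [DecidableEq m] (A : Matrix m m ℝ)
    (v : m → ℝ) : 0 ≤ v ⬝ᵥ (‖toEuclideanCLM (𝕜 := ℝ) A‖ • 1 + A) *ᵥ v := by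
  rw [add_mulVec, smul_mulVec, one_mulVec, dotProduct_add, dotProduct_smul, smul_eq_mul]
  linarith [neg_abs_le (v ⬝ᵥ A *ᵥ v), abs_dotProduct_mulVec_self_le A v]

def traceGramForm (M : Matrix m m ℝ) : QuadraticForm ℝ (Matrix m r ℝ) :=
  LinearMap.BilinMap.toQuadraticMap <| LinearMap.mk₂ ℝ (fun U V => trace (Mᵀ * (U * Vᵀ)))
    (fun _ _ _ => by simp only [Matrix.add_mul, Matrix.mul_add, trace_add])
    (fun _ _ _ => by simp only [Matrix.smul_mul, Matrix.mul_smul, trace_smul])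
    (fun _ _ _ => by simp only [transpose_add, Matrix.mul_add, trace_add])
    (fun _ _ _ => by simp only [transpose_smul, Matrix.mul_smul, trace_smul])

theorem traceGramForm_apply (M : Matrix m m ℝ) (U : Matrix m r ℝ) :
    traceGramForm M U = trace (Mᵀ * (U * Uᵀ)) := rfl

theorem traceGramForm_apply_eq_sum (M : Matrix m m ℝ) (U : Matrix m r ℝ) :
    traceGramForm M U = ∑ k, Uᵀ k ⬝ᵥ M *ᵥ Uᵀ k := by
  rw [traceGramForm_apply, ← trace_transpose, transpose_mul, transpose_mul, transpose_transpose,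
    Matrix.mul_assoc, trace_mul_comm, Matrix.mul_assoc]
  simp only [trace, diag, mul_apply, transpose_apply, dotProduct, mulVec]

theorem traceGramForm_smul_one_add [DecidableEq m] (c : ℝ) (M : Matrix m m ℝ)
    (U : Matrix m r ℝ) :
    traceGramForm (c • 1 + M) U = c * ∑ i, ∑ j, U i j ^ 2 + traceGramForm M U := by
  simp [traceGramForm_apply, Matrix.add_mul, trace, mul_apply, sq, Finset.mul_sum,
    Finset.sum_add_distrib]

theorem convexOn_traceGramForm {M : Matrix m m ℝ} (hM : ∀ v, 0 ≤ v ⬝ᵥ M *ᵥ v) :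
    ConvexOn ℝ Set.univ (traceGramForm (r := r) M) :=
  QuadraticMap.convexOn_univ_of_nonneg_s18 _ fun U => by
    rw [traceGramForm_apply_eq_sum]; exact Finset.sum_nonneg fun k _ => hM _

end Matrix

/-- The robust matrix sensing component U ↦ |y − ⟨A, UUᵀ⟩| is weakly convex with
parameter 2‖A‖₂ (spectral norm) with respect to the Frobenius inner product;
here ‖U‖_F² = ∑ᵢⱼ Uᵢⱼ². -/
theorem robust_matrix_sensing_weaklyConvex
    (n r : ℕ) (A : Matrix (Fin n) (Fin n) ℝ) (y : ℝ) :
    ConvexOn ℝ Set.univ (fun U : Matrix (Fin n) (Fin r) ℝ =>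
      |y - Matrix.trace (Aᵀ * (U * Uᵀ))| +
        ‖Matrix.toEuclideanCLM (𝕜 := ℝ) A‖ * ∑ i, ∑ j, (U i j) ^ 2) := by
  set c := ‖toEuclideanCLM (𝕜 := ℝ) A‖
  have hplus : ConvexOn ℝ Set.univ (traceGramForm (r := Fin r) (c • 1 + A)) :=
    convexOn_traceGramForm (dotProduct_mulVec_opNorm_smul_one_add_nonneg A)
  have hminus : ConvexOn ℝ Set.univ (traceGramForm (r := Fin r) (c • 1 + -A)) := by
    have hpsd := dotProduct_mulVec_opNorm_smul_one_add_nonneg (-A)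
    rw [map_neg, norm_neg] at hpsd
    exact convexOn_traceGramForm hpsd
  refine ((hminus.add_const y).sup (hplus.add_const (-y))).congr fun U _ => ?_
  simp only [Pi.sup_apply, Pi.add_apply, traceGramForm_smul_one_add]
  rw [traceGramForm_apply, traceGramForm_apply, transpose_neg, Matrix.neg_mul, trace_neg,
    abs_eq_max_neg, ← max_add_add_right]
  congr 1 <;> ring
end
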